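/- arXiv:1712.04524 — 12 statements merged into one kernel-verified Lean document; each statement's English description precedes it below -/
import Mathlib

section
/- The discrete interval hypergraph I(n), whose vertices are the points 1, 2, ..., n on a line and whose hyperedges are all sets of consecutive integers {a, a+1, ..., b} with 1 ≤ a ≤ b ≤ n, has conflict-free chromatic number exactly ⌊log₂ n⌋ + 1. -/
/-!
Upper bound: color `i` by its 2-adic valuation. Between two distinct points of equal valuation
`v` lies a multiple of `2 ^ (v + 1)`, so in every interval the maximal valuation is attained
exactly once, and on `{1, …, n}` the valuations are at most `log₂ n`.

Lower bound: the uniquely colored point of an interval splits it into two intervals that miss its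
color; by induction an interval carrying `k` colors has at most `2 ^ k - 1` points.
-/

open Finset

def ConflictFreeOn {α β : Type*} (c : α → β) (s : Finset α) : Prop :=
  ∃ x ∈ s, ∀ y ∈ s, c y = c x → y = x

theorem card_image_lt_card_image_of_unique {α β : Type*} [DecidableEq β] {c : α → β}
    {s t : Finset α} {x : α} (hst : s ⊆ t) (hxt : x ∈ t) (hxs : x ∉ s)
    (huniq : ∀ y ∈ t, c y = c x → y = x) : #(s.image c) < #(t.image c) := by
  refine card_lt_card ((ssubset_iff_of_subset (image_subset_image hst)).2
    ⟨c x, mem_image_of_mem c hxt, fun hcx => ?_⟩)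
  obtain ⟨y, hys, hcy⟩ := mem_image.1 hcx
  exact hxs (huniq y (hst hys) hcy ▸ hys)

theorem sub_lt_two_pow_card_image_Ico {β : Type*} [DecidableEq β] {c : ℕ → β} {a b : ℕ}
    (hcf : ∀ a' b', a ≤ a' → a' < b' → b' ≤ b → ConflictFreeOn c (Ico a' b')) :
    b - a < 2 ^ #((Ico a b).image c) := by
  induction h : b - a using Nat.strong_induction_on generalizing a b with
  | _ d ih =>
  rcases le_or_gt b a with hba | hab
  · obtain rfl : d = 0 := by omega
    positivity
  obtain ⟨x, hx, huniq⟩ := hcf a b le_rfl hab le_rfl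
  have hxab := mem_Ico.1 hx
  have hleft := ih (x - a) (by omega)
    (fun a' b' h₁ h₂ h₃ => hcf a' b' h₁ h₂ (by omega)) rfl
  have hright := ih (b - (x + 1)) (by omega)
    (fun a' b' h₁ h₂ h₃ => hcf a' b' (by omega) h₂ h₃) rfl
  have hcard_left := card_image_lt_card_image_of_unique
    (Ico_subset_Ico_right hxab.2.le) hx (by simp) huniq
  have hcard_right := card_image_lt_card_image_of_unique
    (Ico_subset_Ico_left (by omega : a ≤ x + 1)) hx (by simp) huniq
  obtain ⟨m, hm⟩ := Nat.exists_eq_add_one_of_ne_zero (by omega : #((Ico a b).image c) ≠ 0)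
  have hpow_left := Nat.pow_le_pow_right two_pos (Nat.le_of_lt_succ (hm ▸ hcard_left))
  have hpow_right := Nat.pow_le_pow_right two_pos (Nat.le_of_lt_succ (hm ▸ hcard_right))
  rw [hm, pow_succ]
  omega

theorem add_one_sub_lt_two_pow_card_image_Icc {β : Type*} [DecidableEq β] {c : ℕ → β}
    {a b : ℕ}
    (hcf : ∀ a' b', a ≤ a' → a' ≤ b' → b' ≤ b → ConflictFreeOn c (Icc a' b')) :
    b + 1 - a < 2 ^ #((Icc a b).image c) := by
  rw [← Ico_add_one_right_eq_Icc]
  refine sub_lt_two_pow_card_image_Ico fun a' b' h₁ h₂ h₃ => ?_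
  obtain ⟨b'', rfl⟩ := Nat.exists_eq_add_one_of_ne_zero (by omega : b' ≠ 0)
  rw [Ico_add_one_right_eq_Icc]
  exact hcf a' b'' h₁ (by omega) (by omega)

theorem exists_mem_Icc_two_pow_succ_dvd {v x y : ℕ} (hx : 2 ^ v ∣ x) (hy : 2 ^ v ∣ y)
    (hxy : x < y) : ∃ z ∈ Icc x y, 2 ^ (v + 1) ∣ z := by
  obtain ⟨p, rfl⟩ := hx
  obtain ⟨q, rfl⟩ := hy
  have hpq : p < q := Nat.lt_of_mul_lt_mul_left hxy
  rcases Nat.even_or_odd' p with ⟨r, rfl | rfl⟩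
  · exact ⟨2 ^ v * (2 * r), mem_Icc.2 ⟨le_rfl, hxy.le⟩, ⟨r, by ring⟩⟩
  · refine ⟨2 ^ v * (2 * r + 2), mem_Icc.2 ⟨?_, ?_⟩, ⟨r + 1, by ring⟩⟩
    · exact Nat.mul_le_mul_left _ (by omega)
    · exact Nat.mul_le_mul_left _ (by omega)

theorem conflictFreeOn_padicValNat_two_Icc {a b : ℕ} (ha : 0 < a) (hab : a ≤ b) :
    ConflictFreeOn (padicValNat 2) (Icc a b) := by
  obtain ⟨x, hx, hmax⟩ :=
    exists_max_image (Icc a b) (padicValNat 2) ⟨a, mem_Icc.2 ⟨le_rfl, hab⟩⟩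
  refine ⟨x, hx, fun y hy hxy => ?_⟩
  have hne_zero : ∀ z ∈ Icc a b, z ≠ 0 := fun z hz => by have := (mem_Icc.1 hz).1; omega
  have no_two_points : ∀ u ∈ Icc a b, ∀ w ∈ Icc a b, u < w →
      2 ^ padicValNat 2 x ∣ u → 2 ^ padicValNat 2 x ∣ w → False := by
    intro u hu w hw huw hdu hdw
    obtain ⟨z, hz, hdz⟩ := exists_mem_Icc_two_pow_succ_dvd hdu hdw huw
    have hzab : z ∈ Icc a b := Icc_subset_Icc (mem_Icc.1 hu).1 (mem_Icc.1 hw).2 hz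
    have := (padicValNat_dvd_iff_le (hne_zero z hzab)).1 hdz
    have := hmax z hzab
    omega
  have hdx : 2 ^ padicValNat 2 x ∣ x := pow_padicValNat_dvd
  have hdy : 2 ^ padicValNat 2 x ∣ y := hxy ▸ pow_padicValNat_dvd
  rcases lt_trichotomy y x with hlt | heq | hgt
  · exact (no_two_points y hy x hx hlt hdy hdx).elim
  · exact heq
  · exact (no_two_points x hx y hy hgt hdx hdy).elim

/-- The CF-chromatic number of the discrete interval hypergraph `I(n)`
(vertices `1,…,n`, hyperedges all integer intervals `{a,…,b}` with `1 ≤ a ≤ b ≤ n`)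
is exactly `⌊log₂ n⌋ + 1`: it is the least `t` such that there is a coloring with
colors `< t` in which every interval contains a uniquely colored point. -/
theorem stmt4 (n : ℕ) (hn : 1 ≤ n) :
    IsLeast {t : ℕ | ∃ c : ℕ → ℕ, (∀ i ∈ Finset.Icc 1 n, c i < t) ∧
      ∀ a b : ℕ, 1 ≤ a → a ≤ b → b ≤ n →
        ∃ x ∈ Finset.Icc a b, ∀ y ∈ Finset.Icc a b, c y = c x → y = x}
      (Nat.log 2 n + 1) := by
  refine ⟨⟨padicValNat 2, fun i hi => ?_,
    fun a b ha hab _ => conflictFreeOn_padicValNat_two_Icc ha hab⟩, ?_⟩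
  · exact Nat.lt_succ_of_le
      ((padicValNat_le_nat_log i).trans (Nat.log_mono_right (mem_Icc.1 hi).2))
  rintro t ⟨c, hc, hcf⟩
  have hn_lt : n + 1 - 1 < 2 ^ #((Icc 1 n).image c) :=
    add_one_sub_lt_two_pow_card_image_Icc hcf
  have hcolors : #((Icc 1 n).image c) ≤ t :=
    (card_le_card (image_subset_iff.2 fun i hi => mem_range.2 (hc i hi))).trans_eq (card_range t)
  exact Nat.log_lt_of_lt_pow (by omega)
    ((Nat.add_sub_cancel n 1 ▸ hn_lt).trans_le (Nat.pow_le_pow_right two_pos hcolors))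
end

section
/- The discrete interval hypergraph I(n) admits a conflict-free coloring using at most ⌊log₂ n⌋ + 1 colors. -/
/-!
Colour `i` by its 2-adic valuation (the ruler sequence), which is at most `⌊log₂ n⌋` for
`1 ≤ i ≤ n`. If two distinct numbers `x < y` share the valuation `v`, then `x / 2 ^ v` is odd,
so `x + 2 ^ v ≤ y` is divisible by `2 ^ (v + 1)`. Hence in every interval the colour of
maximal valuation occurs exactly once.
-/

open Finset

lemma exists_mem_Ioc_padicValNat_two_lt {x y : ℕ} (hx : x ≠ 0) (hxy : x < y)
    (hv : padicValNat 2 x = padicValNat 2 y) :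
    ∃ z ∈ Set.Ioc x y, padicValNat 2 x < padicValNat 2 z := by
  obtain ⟨m, hm⟩ : 2 ^ padicValNat 2 x ∣ x := pow_padicValNat_dvd
  obtain ⟨m', hm'⟩ : 2 ^ padicValNat 2 x ∣ y := hv.symm ▸ pow_padicValNat_dvd
  have hm_odd : ¬ 2 ∣ m := fun ⟨k, hk⟩ => pow_succ_padicValNat_not_dvd (p := 2) hx
    ⟨k, calc x = 2 ^ padicValNat 2 x * m := hm
      _ = 2 ^ (padicValNat 2 x + 1) * k := by rw [hk, pow_succ, mul_assoc]⟩
  generalize padicValNat 2 x = v at hm hm' ⊢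
  have hmm' : m < m' := Nat.lt_of_mul_lt_mul_left (hm ▸ hm' ▸ hxy)
  have hz : 2 ^ v * (m + 1) ≠ 0 := by positivity
  refine ⟨2 ^ v * (m + 1), ⟨?_, ?_⟩, ?_⟩
  · rw [hm]; exact Nat.mul_lt_mul_of_pos_left (Nat.lt_succ_self m) (by positivity)
  · rw [hm']; exact Nat.mul_le_mul_left _ hmm'
  · obtain ⟨k, hk⟩ : 2 ∣ m + 1 := by omega
    exact (padicValNat_dvd_iff_le hz).mp ⟨k, by rw [hk, pow_succ, mul_assoc]⟩

lemma eq_of_padicValNat_two_eq_of_forall_le {a b x y : ℕ} (ha : a ≠ 0) (hx : x ∈ Icc a b)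
    (hy : y ∈ Icc a b) (hmax : ∀ z ∈ Icc a b, padicValNat 2 z ≤ padicValNat 2 x)
    (hxy : padicValNat 2 y = padicValNat 2 x) : y = x := by
  have no_tie : ∀ u ∈ Icc a b, ∀ w ∈ Icc a b, u < w → padicValNat 2 u = padicValNat 2 w →
      padicValNat 2 u = padicValNat 2 x → False := by
    intro u hu w hw huw huw_eq hux
    rw [mem_Icc] at hu hw
    obtain ⟨z, ⟨hzu, hzw⟩, hlt⟩ := exists_mem_Ioc_padicValNat_two_lt (by omega) huw huw_eq
    have := hmax z (mem_Icc.mpr ⟨by omega, by omega⟩)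
    omega
  rcases lt_trichotomy y x with h | h | h
  · exact (no_tie y hy x hx h hxy hxy).elim
  · exact h
  · exact (no_tie x hx y hy h hxy.symm rfl).elim

/-- The discrete interval hypergraph `I(n)` admits a conflict-free coloring
with at most `⌊log₂ n⌋ + 1` colors. -/
theorem stmt5 (n : ℕ) :
    ∃ c : ℕ → ℕ, (∀ i ∈ Finset.Icc 1 n, c i < Nat.log 2 n + 1) ∧
      ∀ a b : ℕ, 1 ≤ a → a ≤ b → b ≤ n →
        ∃ x ∈ Finset.Icc a b, ∀ y ∈ Finset.Icc a b, c y = c x → y = x := by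
  refine ⟨padicValNat 2, fun i hi => ?_, fun a b ha hab _ => ?_⟩
  · exact Nat.lt_succ_of_le
      ((padicValNat_le_nat_log i).trans (Nat.log_mono_right (mem_Icc.mp hi).2))
  · obtain ⟨x, hx, hmax⟩ :=
      exists_max_image (Icc a b) (padicValNat 2) (nonempty_Icc.mpr hab)
    exact ⟨x, hx, fun y hy hxy =>
      eq_of_padicValNat_two_eq_of_forall_le (by omega) hx hy hmax hxy⟩
end

section
/- Any conflict-free coloring of the discrete interval hypergraph I(n) requires at least ⌊log₂ n⌋ + 1 colors. -/
lemma cf_aux : ∀ m : ℕ, ∀ (c : ℕ → ℕ) (a b : ℕ), b + 1 = a + m → 1 ≤ m →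
    (∀ a' b', a ≤ a' → a' ≤ b' → b' ≤ b →
      ∃ x ∈ Finset.Icc a' b', ∀ y ∈ Finset.Icc a' b', c y = c x → y = x) →
    Nat.log 2 m + 1 ≤ ((Finset.Icc a b).image c).card := by
  intro m
  induction m using Nat.strong_induction_on with
  | _ m ih =>
    intro c a b hab hm hcf
    obtain ⟨x, hx, hux⟩ := hcf a b le_rfl (by omega) le_rfl
    rw [Finset.mem_Icc] at hx
    by_cases h2 : m = 1
    · subst h2
      simp only [Nat.log_one_right, Nat.zero_add]
      apply Finset.card_pos.mpr
      exact ⟨c x, Finset.mem_image_of_mem c (Finset.mem_Icc.mpr hx)⟩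
    · have hm2 : 2 ≤ m := by omega
      have hlog : Nat.log 2 m = Nat.log 2 (m / 2) + 1 := by
        have := Nat.log_div_base 2 m
        have hpos : 0 < Nat.log 2 m := Nat.log_pos (by norm_num) hm2
        omega
      -- pick a subinterval of length m/2 avoiding x
      have hsplit : m / 2 ≤ x - a ∨ m / 2 ≤ b - x := by omega
      obtain ⟨a', b', ha1, hb1, hlen, hxout⟩ :
          ∃ a' b', a ≤ a' ∧ b' ≤ b ∧ b' + 1 = a' + m / 2 ∧ (x < a' ∨ b' < x) := by
        rcases hsplit with h | h
        · exact ⟨a, a + m / 2 - 1, le_rfl, by omega, by omega, by omega⟩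
        · exact ⟨x + 1, x + m / 2, by omega, by omega, by omega, by omega⟩
      have hIH := ih (m / 2) (by omega) c a' b' hlen (by omega)
        (fun a'' b'' h1 h2 h3 => hcf a'' b'' (by omega) h2 (by omega))
      have hcx : c x ∉ (Finset.Icc a' b').image c := by
        intro hmem
        obtain ⟨y, hy, hcy⟩ := Finset.mem_image.mp hmem
        rw [Finset.mem_Icc] at hy
        have := hux y (Finset.mem_Icc.mpr ⟨by omega, by omega⟩) hcy
        omega
      have hsub : insert (c x) ((Finset.Icc a' b').image c) ⊆ (Finset.Icc a b).image c := by
        intro z hz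
        rcases Finset.mem_insert.mp hz with h | h
        · exact h ▸ Finset.mem_image_of_mem c (Finset.mem_Icc.mpr hx)
        · obtain ⟨y, hy, hcy⟩ := Finset.mem_image.mp h
          rw [Finset.mem_Icc] at hy
          exact hcy ▸ Finset.mem_image_of_mem c (Finset.mem_Icc.mpr ⟨by omega, by omega⟩)
      have := Finset.card_le_card hsub
      rw [Finset.card_insert_of_notMem hcx] at this
      omega

/-- Any conflict-free coloring of the discrete interval hypergraph `I(n)`
uses at least `⌊log₂ n⌋ + 1` colors. -/
theorem stmt6 (n : ℕ) (hn : 1 ≤ n) (c : ℕ → ℕ)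
    (hcf : ∀ a b : ℕ, 1 ≤ a → a ≤ b → b ≤ n →
      ∃ x ∈ Finset.Icc a b, ∀ y ∈ Finset.Icc a b, c y = c x → y = x) :
    Nat.log 2 n + 1 ≤ ((Finset.Icc 1 n).image c).card :=
  cf_aux n c 1 n (by omega) hn (fun a' b' h1 h2 h3 => hcf a' b' h1 h2 h3)
end

section
/- Let H = (V, 𝓔) be a hypergraph on n vertices such that H and every vertex-induced subhypergraph of H admit a (k+1)-weak coloring with at most t colors. Then the k-conflict-free chromatic number of H is at most O(t · log n); more precisely, the iterative algorithm that repeatedly (k+1)-weak colors the remaining vertices and freezes the largest color class uses at most ⌈t · (ln n + 1)⌉ colors (plus a bounded additive constant) and yields a valid k-CF coloring. -/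
/-- If a hypergraph `H` on `n` vertices and all its vertex-induced subhypergraphs
admit a `(k+1)`-weak coloring with at most `t` colors, then `H` admits a
`k`-conflict-free coloring with at most `⌈t·(ln n + 1)⌉` colors plus a bounded
additive constant (independent of the hypergraph); in particular
`χ_{k-cf}(H) = O(t log n)`. -/
theorem stmt7 (k t : ℕ) (hk : 1 ≤ k) (ht : 1 ≤ t) :
    ∃ C : ℕ, ∀ (V : Type) [Fintype V] [DecidableEq V] (E : Finset (Finset V)) (n : ℕ),
      Fintype.card V = n → 1 ≤ n →
      (∀ V' : Finset V, ∃ c : V → Fin t, ∀ S ∈ E,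
        k + 1 ≤ (S ∩ V').card → ∃ u ∈ S ∩ V', ∃ w ∈ S ∩ V', c u ≠ c w) →
      ∃ c : V → ℕ,
        (∀ v, c v < ⌈(t : ℝ) * (Real.log n + 1)⌉₊ + C) ∧
        ∀ S ∈ E, S.Nonempty →
          ∃ i, 1 ≤ (S.filter fun v => c v = i).card ∧ (S.filter fun v => c v = i).card ≤ k := by
  classical
  refine ⟨2, ?_⟩
  intro V _ _ E n hcard hn hweak
  set m := ⌈(t : ℝ) * (Real.log n + 1)⌉₊ + 2 with hm
  -- choose weak colorings for every induced subhypergraph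
  choose wc hwc using hweak
  -- for each remaining set, pick the largest color class
  have hFex : ∀ R : Finset V, ∃ j : Fin t, ∀ j' : Fin t,
      (R.filter fun v => wc R v = j').card ≤ (R.filter fun v => wc R v = j).card := by
    intro R
    obtain ⟨j, -, hj⟩ := Finset.exists_max_image Finset.univ
      (fun j => (R.filter fun v => wc R v = j).card) ⟨⟨0, ht⟩, Finset.mem_univ _⟩
    exact ⟨j, fun j' => hj j' (Finset.mem_univ _)⟩
  choose jmax hjmax using hFex
  set F : Finset V → Finset V := fun R => R.filter fun v => wc R v = jmax R with hF
  have hFsub : ∀ R, F R ⊆ R := fun R => Finset.filter_subset _ _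
  -- pigeonhole: the largest class has at least |R|/t vertices
  have hFbig : ∀ R : Finset V, R.card ≤ t * (F R).card := by
    intro R
    have h1 : R.card = ∑ j : Fin t, (R.filter fun v => wc R v = j).card :=
      Finset.card_eq_sum_card_fiberwise (fun v _ => Finset.mem_univ _)
    calc R.card = ∑ j : Fin t, (R.filter fun v => wc R v = j).card := h1
      _ ≤ ∑ _j : Fin t, (F R).card := Finset.sum_le_sum fun j _ => hjmax R j
      _ = t * (F R).card := by simp [Finset.sum_const, mul_comm]
  -- the iteration
  set R : ℕ → Finset V := fun i => Nat.rec Finset.univ (fun _ Ri => Ri \ F Ri) i with hR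
  have hRsucc : ∀ i, R (i+1) = R i \ F (R i) := fun i => rfl
  have hRmono : ∀ i, R (i+1) ⊆ R i := fun i => Finset.sdiff_subset
  have hRanti : ∀ i j, i ≤ j → R j ⊆ R i := by
    intro i j hij
    induction j with
    | zero => simp_all
    | succ j ih =>
      rcases Nat.eq_or_lt_of_le hij with h | h
      · subst h; exact Finset.Subset.refl _
      · exact (hRmono j).trans (ih (Nat.lt_succ_iff.mp h))
  -- geometric decay
  have hdecay : ∀ i, t * (R (i+1)).card ≤ (t-1) * (R i).card := by
    intro i
    have hsum : (R (i+1)).card + (F (R i)).card = (R i).card := by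
      rw [hRsucc]
      exact Finset.card_sdiff_add_card_eq_card (hFsub _)
    have h1 : (R i).card ≤ t * (F (R i)).card := hFbig _
    have h2 : t * (R (i+1)).card + t * (F (R i)).card = t * (R i).card := by
      rw [← Nat.mul_add, hsum]
    have h3 : t * (R (i+1)).card + (R i).card ≤ t * (R i).card := by omega
    have h4 : (t-1) * (R i).card = t * (R i).card - (R i).card := by
      cases t with
      | zero => omega
      | succ t' => simp [Nat.succ_sub_one, Nat.succ_mul]
    omega
  have hpow : ∀ i, t^i * (R i).card ≤ (t-1)^i * n := by
    intro i
    induction i with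
    | zero => simpa [hR] using hcard.le
    | succ i ih =>
      calc t^(i+1) * (R (i+1)).card = t^i * (t * (R (i+1)).card) := by ring
        _ ≤ t^i * ((t-1) * (R i).card) := Nat.mul_le_mul_left _ (hdecay i)
        _ = (t-1) * (t^i * (R i).card) := by ring
        _ ≤ (t-1) * ((t-1)^i * n) := Nat.mul_le_mul_left _ ih
        _ = (t-1)^(i+1) * n := by ring
  -- after m rounds, nothing remains
  have htR : (0:ℝ) < (t:ℝ) := by exact_mod_cast ht
  have hRm : R m = ∅ := by
    have h1 : ((t:ℝ))^m * ((R m).card : ℝ) ≤ ((t:ℝ) - 1)^m * n := by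
      have := hpow m
      have hc : (((t-1 : ℕ)):ℝ) = (t:ℝ) - 1 := by
        rw [Nat.cast_sub ht]; simp
      calc ((t:ℝ))^m * ((R m).card : ℝ) = ((t^m * (R m).card : ℕ) : ℝ) := by push_cast; ring
        _ ≤ (((t-1)^m * n : ℕ) : ℝ) := by exact_mod_cast this
        _ = ((t:ℝ) - 1)^m * n := by push_cast [hc]; ring
    have h2 : ((R m).card : ℝ) ≤ (((t:ℝ) - 1)/t)^m * n := by
      rw [div_pow, div_mul_eq_mul_div, le_div_iff₀ (pow_pos htR m)]
      linarith [h1]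
    have h3 : ((t:ℝ) - 1)/t ≤ Real.exp (-(1/t)) := by
      have := Real.add_one_le_exp (-(1/(t:ℝ)))
      have ht0 : (t:ℝ) ≠ 0 := ne_of_gt htR
      have : ((t:ℝ) - 1)/t = -(1/(t:ℝ)) + 1 := by field_simp; ring
      rw [this]
      exact Real.add_one_le_exp _
    have hnonneg : (0:ℝ) ≤ ((t:ℝ) - 1)/t := by
      apply div_nonneg _ htR.le
      have : (1:ℝ) ≤ t := by exact_mod_cast ht
      linarith
    have h4 : (((t:ℝ) - 1)/t)^m ≤ Real.exp (-(1/t))^m := pow_le_pow_left₀ hnonneg h3 m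
    have h5 : Real.exp (-(1/(t:ℝ)))^m = Real.exp (-(m/(t:ℝ))) := by
      rw [← Real.exp_nat_mul]
      congr 1
      field_simp
    have hlog : Real.log n < (m:ℝ)/t := by
      have hceil : (t:ℝ) * (Real.log n + 1) ≤ (⌈(t : ℝ) * (Real.log n + 1)⌉₊ : ℝ) := by
        apply Nat.le_ceil
      have hlogn : (0:ℝ) ≤ Real.log n := Real.log_nonneg (by exact_mod_cast hn)
      have hmge : (t:ℝ) * (Real.log n + 1) + 2 ≤ (m:ℝ) := by
        rw [hm]; push_cast; linarith
      have ht1 : (1:ℝ) ≤ t := by exact_mod_cast ht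
      rw [lt_div_iff₀ htR]
      nlinarith
    have h6 : (n:ℝ) * Real.exp (-(m/(t:ℝ))) < 1 := by
      rw [← Real.log_lt_log_iff (by positivity) one_pos] at *
      have hlt : Real.log ((n:ℝ) * Real.exp (-(m/(t:ℝ)))) < Real.log 1 := by
        rw [Real.log_mul (by positivity) (Real.exp_ne_zero _), Real.log_exp, Real.log_one]
        linarith
      exact hlt
    have h7 : ((R m).card : ℝ) < 1 := by
      calc ((R m).card : ℝ) ≤ (((t:ℝ) - 1)/t)^m * n := h2
        _ ≤ Real.exp (-(m/(t:ℝ))) * n := by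
            apply mul_le_mul_of_nonneg_right _ (Nat.cast_nonneg n)
            rw [← h5]; exact h4
        _ = (n:ℝ) * Real.exp (-(m/(t:ℝ))) := by ring
        _ < 1 := h6
    have : (R m).card = 0 := by exact_mod_cast Nat.lt_one_iff.mp (by exact_mod_cast h7)
    exact Finset.card_eq_zero.mp this
  -- the coloring: each vertex gets the round at which it was frozen
  have hm1 : 1 ≤ m := by omega
  have hex : ∀ v : V, ∃ i, v ∉ R (i+1) := by
    intro v
    refine ⟨m - 1, ?_⟩
    rw [Nat.sub_add_cancel hm1, hRm]
    exact Finset.notMem_empty v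
  set c : V → ℕ := fun v => Nat.find (hex v) with hc
  have hcspec : ∀ v, v ∉ R (c v + 1) := fun v => Nat.find_spec (hex v)
  have hcmem : ∀ v, v ∈ R (c v) := by
    intro v
    rcases Nat.eq_zero_or_pos (c v) with h | h
    · rw [h]; exact Finset.mem_univ v
    · have := Nat.find_min (hex v) (show c v - 1 < c v by omega)
      push_neg at this
      have heq : c v - 1 + 1 = c v := by omega
      rwa [heq] at this
  have hclt : ∀ v, c v < m := by
    intro v
    have : c v ≤ m - 1 := Nat.find_min' (hex v) (by
      rw [Nat.sub_add_cancel hm1, hRm]; exact Finset.notMem_empty v)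
    omega
  have hmemiff : ∀ v i, v ∈ R i ↔ i ≤ c v := by
    intro v i
    constructor
    · intro hvi
      by_contra h
      push_neg at h
      exact hcspec v (hRanti _ _ h hvi)
    · intro h
      exact hRanti _ _ h (hcmem v)
  refine ⟨c, fun v => hclt v, ?_⟩
  intro S hSE hSne
  obtain ⟨v0, hv0S, hv0max⟩ := Finset.exists_max_image S c hSne
  set i := c v0 with hi
  have hfilter : S.filter (fun v => c v = i) = S ∩ R i := by
    ext v
    simp only [Finset.mem_filter, Finset.mem_inter, hmemiff]
    constructor
    · rintro ⟨hvS, hvc⟩; exact ⟨hvS, hvc.ge⟩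
    · rintro ⟨hvS, hvc⟩; exact ⟨hvS, le_antisymm (hv0max v hvS) hvc⟩
  refine ⟨i, ?_, ?_⟩
  · rw [hfilter]
    have : v0 ∈ S ∩ R i := Finset.mem_inter.mpr ⟨hv0S, hcmem v0⟩
    exact Finset.card_pos.mpr ⟨v0, this⟩
  · rw [hfilter]
    by_contra hbig
    push_neg at hbig
    obtain ⟨u, hu, w, hw, huw⟩ := hwc (R i) S hSE hbig
    -- S ∩ R i is contained in the frozen class F (R i)
    have hsubF : S ∩ R i ⊆ F (R i) := by
      intro v hv
      obtain ⟨hvS, hvR⟩ := Finset.mem_inter.mp hv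
      have hvc : c v = i := by
        have h1 : i ≤ c v := (hmemiff v i).mp hvR
        exact le_antisymm (hv0max v hvS) h1
      have hnot : v ∉ R (i+1) := by rw [← hvc]; exact hcspec v
      rw [hRsucc] at hnot
      simp only [Finset.mem_sdiff, not_and, not_not] at hnot
      exact hnot hvR
    have hu' := Finset.mem_filter.mp (hsubF hu)
    have hw' := Finset.mem_filter.mp (hsubF hw)
    exact huw (hu'.2.trans hw'.2.symm)
end

section
/- For any hypergraph H with maximum degree Δ and any k > 1, there exists a (k+1)-weak coloring of H with at most 13 · Δ^{1/k} colors (i.e., a coloring in which no hyperedge of size at least k+1 is monochromatic). -/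
/-!
Replacing every edge of size at least `k + 1` by a `(k + 1)`-subset does not raise degrees, so
it suffices to color a `(k + 1)`-uniform family `T` of maximum degree `Δ`. Instead of the local
lemma we count. Let `G(A)` be the colorings of `A` with `N` colors in which no edge inside `A`
is monochromatic. Extending `f ∈ G(A)` by a color at `v ∉ A` fails only if some edge `t ∋ v`
becomes monochromatic, and those extensions number at most `N · |G(A \ t)|`, which by induction
is at most `N (2/N)^k |G(A)|`. With at most `Δ` such edges and `2^(k+1) Δ ≤ N^k`, at least half
of the `N |G(A)|` extensions are good: `N |G(A)| ≤ 2 |G(A ∪ {v})|`, so `G(V)` is nonempty.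
`N = 4 ⌈Δ^(1/k)⌉ ≤ 8 Δ^(1/k)` colors suffice.
-/

open Finset Function

theorem pow_card_mul_le_pow_card_mul_union {α : Type*} [DecidableEq α] {g : Finset α → ℕ}
    {a b : ℕ} {B : Finset α}
    (h : ∀ C x, x ∉ C → insert x C ⊆ B → a * g C ≤ b * g (insert x C))
    {C D : Finset α} (hCD : Disjoint C D) (hB : C ∪ D ⊆ B) :
    a ^ #D * g C ≤ b ^ #D * g (C ∪ D) := by
  induction D using Finset.induction_on with
  | empty => simp
  | insert x D hxD ih =>
    rw [disjoint_insert_right] at hCD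
    rw [union_insert] at hB ⊢
    have hstep := h (C ∪ D) x (by simp [hCD.1, hxD]) hB
    calc a ^ #(insert x D) * g C = a * (a ^ #D * g C) := by
          rw [card_insert_of_notMem hxD, pow_succ]; ring
      _ ≤ a * (b ^ #D * g (C ∪ D)) :=
          Nat.mul_le_mul_left _ (ih hCD.2 ((subset_insert _ _).trans hB))
      _ = b ^ #D * (a * g (C ∪ D)) := by ring
      _ ≤ b ^ #D * (b * g (insert x (C ∪ D))) := Nat.mul_le_mul_left _ hstep
      _ = b ^ #(insert x D) * g (insert x (C ∪ D)) := by
          rw [card_insert_of_notMem hxD, pow_succ]; ring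

section

variable {V : Type*} {N : ℕ}

/-- A coloring of the part `A` is encoded as a coloring of all of `V` that is `d` off `A`. -/
def IsWeakColoringOn (T : Finset (Finset V)) (d : Fin N) (A : Finset V) (f : V → Fin N) :
    Prop :=
  (∀ x ∉ A, f x = d) ∧ ∀ t ∈ T, t ⊆ A → ∃ u ∈ t, ∃ w ∈ t, f u ≠ f w

open Classical in
noncomputable def weakColorings [Fintype V] [DecidableEq V] (T : Finset (Finset V)) (d : Fin N)
    (A : Finset V) : Finset (V → Fin N) :=
  univ.filter (IsWeakColoringOn T d A)

section

variable {T : Finset (Finset V)} {d : Fin N} {A t : Finset V} {f : V → Fin N} {v : V}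

theorem mem_weakColorings [Fintype V] [DecidableEq V] :
    f ∈ weakColorings T d A ↔ IsWeakColoringOn T d A f := by
  classical
  simp [weakColorings]

theorem IsWeakColoringOn.exists_mono_of_update [DecidableEq V] (hf : IsWeakColoringOn T d A f)
    (c : Fin N) (hbad : ¬ IsWeakColoringOn T d (insert v A) (update f v c)) :
    ∃ t ∈ T, v ∈ t ∧ t ⊆ insert v A ∧ ∀ x ∈ t, update f v c x = c := by
  have hoff : ∀ x ∉ insert v A, update f v c x = d := fun x hx => by
    rw [mem_insert, not_or] at hx
    rw [update_of_ne hx.1]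
    exact hf.1 x hx.2
  have hmono : ¬ ∀ t ∈ T, t ⊆ insert v A → ∃ u ∈ t, ∃ w ∈ t, update f v c u ≠ update f v c w :=
    fun h => hbad ⟨hoff, h⟩
  push Not at hmono
  obtain ⟨t, htT, htA, hmono⟩ := hmono
  have hvt : v ∈ t := by
    by_contra hvt
    have hsame : ∀ x ∈ t, update f v c x = f x := fun x hx =>
      update_of_ne (ne_of_mem_of_not_mem hx hvt) _ _
    obtain ⟨u, hu, w, hw, huw⟩ :=
      hf.2 t htT fun x hx => (mem_insert.1 (htA hx)).resolve_left (ne_of_mem_of_not_mem hx hvt)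
    exact huw (by rw [← hsame u hu, ← hsame w hw]; exact hmono u hu w hw)
  exact ⟨t, htT, hvt, htA, fun x hx => by simpa using hmono x hx v hvt⟩

end

section

variable [Fintype V] [DecidableEq V] {T : Finset (Finset V)} {d : Fin N} {A t : Finset V} {v : V}

theorem card_filter_update_const_le (hv : v ∉ A) :
    #{p ∈ weakColorings T d A ×ˢ (univ : Finset (Fin N)) | ∀ x ∈ t, update p.1 v p.2 x = p.2} ≤
      #(weakColorings T d (A \ t)) * N := by
  -- resetting `f` to `d` on `t` loses nothing: there `f` is `d` at `v` and the new color elsewhere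
  refine le_of_le_of_eq (card_le_card_of_injOn (t := weakColorings T d (A \ t) ×ˢ univ)
    (fun p => (fun x => if x ∈ t then d else p.1 x, p.2)) ?_ ?_) (by simp [card_product])
  · intro p hp
    simp only [coe_filter, mem_product, mem_weakColorings, mem_univ, and_true,
      Set.mem_ofPred_eq] at hp
    obtain ⟨⟨hoff, hgood⟩, -⟩ := hp
    simp only [coe_product, coe_univ, Set.mem_prod, mem_coe, mem_weakColorings, Set.mem_univ,
      and_true]
    refine ⟨fun x hx => ?_, fun t' ht' ht'A => ?_⟩
    · by_cases hxt : x ∈ t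
      · simp [hxt]
      · simp only [hxt, if_false]
        exact hoff x fun hxA => hx (mem_sdiff.2 ⟨hxA, hxt⟩)
    · obtain ⟨u, hu, w, hw, huw⟩ := hgood t' ht' (ht'A.trans sdiff_subset)
      have hut := (mem_sdiff.1 (ht'A hu)).2
      have hwt := (mem_sdiff.1 (ht'A hw)).2
      exact ⟨u, hu, w, hw, by simpa [hut, hwt] using huw⟩
  · intro p hp q hq hpq
    simp only [coe_filter, mem_product, mem_weakColorings, mem_univ, and_true,
      Set.mem_ofPred_eq] at hp hq
    simp only [Prod.mk.injEq] at hpq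
    obtain ⟨hfg, hc⟩ := hpq
    refine Prod.ext (funext fun x => ?_) hc
    by_cases hxt : x ∈ t
    · by_cases hxv : x = v
      · rw [hxv, hp.1.1 v hv, hq.1.1 v hv]
      · have hpx := hp.2 x hxt
        have hqx := hq.2 x hxt
        rw [update_of_ne hxv] at hpx hqx
        rw [hpx, hqx, hc]
    · simpa [hxt] using congrFun hfg x

theorem mul_card_weakColorings_le_add_sum (hv : v ∉ A) :
    N * #(weakColorings T d A) ≤ #(weakColorings T d (insert v A)) +
      ∑ t ∈ T with v ∈ t ∧ t ⊆ insert v A, #(weakColorings T d (A \ t)) * N := by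
  classical
  set X := weakColorings T d A ×ˢ (univ : Finset (Fin N))
  set mono := fun t : Finset V => {p ∈ X | ∀ x ∈ t, update p.1 v p.2 x = p.2}
  have hsplit : X ⊆ {p ∈ X | IsWeakColoringOn T d (insert v A) (update p.1 v p.2)} ∪
      (T.filter fun t => v ∈ t ∧ t ⊆ insert v A).biUnion mono := by
    intro p hp
    by_cases hgood : IsWeakColoringOn T d (insert v A) (update p.1 v p.2)
    · exact mem_union_left _ (mem_filter.2 ⟨hp, hgood⟩)
    · have hf := mem_weakColorings.1 (mem_product.1 hp).1
      obtain ⟨t, htT, hvt, htA, hmono⟩ := hf.exists_mono_of_update p.2 hgood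
      exact mem_union_right _ (mem_biUnion.2 ⟨t, mem_filter.2 ⟨htT, hvt, htA⟩,
        mem_filter.2 ⟨hp, hmono⟩⟩)
  have hgood : #{p ∈ X | IsWeakColoringOn T d (insert v A) (update p.1 v p.2)} ≤
      #(weakColorings T d (insert v A)) := by
    refine card_le_card_of_injOn (fun p => update p.1 v p.2)
      (fun p hp => mem_weakColorings.2 (mem_filter.1 hp).2) ?_
    intro p hp q hq hpq
    have hpA := mem_weakColorings.1 (mem_product.1 (mem_filter.1 hp).1).1
    have hqA := mem_weakColorings.1 (mem_product.1 (mem_filter.1 hq).1).1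
    have hc : p.2 = q.2 := by simpa using congrFun hpq v
    refine Prod.ext (funext fun x => ?_) hc
    by_cases hxv : x = v
    · rw [hxv, hpA.1 v hv, hqA.1 v hv]
    · simpa [update_of_ne hxv] using congrFun hpq x
  calc N * #(weakColorings T d A) = #X := by simp [X, card_product, mul_comm]
    _ ≤ _ := (card_le_card hsplit).trans (card_union_le _ _)
    _ ≤ _ := add_le_add hgood (card_biUnion_le.trans (sum_le_sum fun t _ =>
          card_filter_update_const_le hv))

end

section

variable [Fintype V] [DecidableEq V] {T : Finset (Finset V)} {k Δ : ℕ}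

theorem mul_card_weakColorings_le_two_mul (hT : ∀ t ∈ T, #t = k + 1)
    (hdeg : ∀ v, #{t ∈ T | v ∈ t} ≤ Δ) (hN : 2 ^ (k + 1) * Δ ≤ N ^ k) (d : Fin N)
    (A : Finset V) {v : V} (hv : v ∉ A) :
    N * #(weakColorings T d A) ≤ 2 * #(weakColorings T d (insert v A)) := by
  induction A using Finset.strongInduction generalizing v with
  | H A ih =>
  set g := fun C => #(weakColorings T d C)
  set Tv := T.filter fun t => v ∈ t ∧ t ⊆ insert v A
  have hchain : ∀ t ∈ Tv, N ^ k * g (A \ t) ≤ 2 ^ k * g A := by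
    intro t ht
    obtain ⟨htT, hvt, htA⟩ := mem_filter.1 ht
    have hA : A \ t ∪ t.erase v = A := by
      ext x
      have := @htA x
      simp only [mem_union, mem_sdiff, mem_erase, mem_insert] at this ⊢
      by_cases hxv : x = v <;> [subst hxv; skip] <;> tauto
    have hdisj : Disjoint (A \ t) (t.erase v) :=
      disjoint_of_subset_right (erase_subset v t) sdiff_disjoint
    have := pow_card_mul_le_pow_card_mul_union (g := g) (B := A)
      (fun C x hx hC => ih C ((ssubset_insert hx).trans_subset hC) hx) hdisj hA.le
    rwa [card_erase_of_mem hvt, hT t htT, Nat.add_sub_cancel, hA] at this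
  have hTv : #Tv ≤ Δ :=
    (card_le_card (monotone_filter_right _ fun _ _ h => h.1)).trans (hdeg v)
  have hsum : N ^ k * ∑ t ∈ Tv, g (A \ t) * N ≤ Δ * (2 ^ k * g A * N) :=
    calc N ^ k * ∑ t ∈ Tv, g (A \ t) * N = ∑ t ∈ Tv, N ^ k * g (A \ t) * N := by
          rw [mul_sum]; simp only [mul_assoc]
      _ ≤ ∑ t ∈ Tv, 2 ^ k * g A * N :=
          sum_le_sum fun t ht => Nat.mul_le_mul_right _ (hchain t ht)
      _ = #Tv * (2 ^ k * g A * N) := by rw [sum_const, smul_eq_mul]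
      _ ≤ Δ * (2 ^ k * g A * N) := Nat.mul_le_mul_right _ hTv
  have hcount : N * g A ≤ g (insert v A) + ∑ t ∈ Tv, g (A \ t) * N :=
    mul_card_weakColorings_le_add_sum hv
  refine Nat.le_of_mul_le_mul_left ?_ (pow_pos d.pos k)
  have hcount' := Nat.mul_le_mul_left (N ^ k) hcount
  have hN' := Nat.mul_le_mul_right (N * g A) hN
  rw [pow_succ] at hN'
  linarith

theorem weakColorings_nonempty (hT : ∀ t ∈ T, #t = k + 1)
    (hdeg : ∀ v, #{t ∈ T | v ∈ t} ≤ Δ) (hN : 2 ^ (k + 1) * Δ ≤ N ^ k) (d : Fin N)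
    (A : Finset V) : (weakColorings T d A).Nonempty := by
  induction A using Finset.induction_on with
  | empty =>
    refine ⟨fun _ => d, mem_weakColorings.2 ⟨fun _ _ => rfl, fun t ht hsub => ?_⟩⟩
    have := hT t ht
    rw [subset_empty.1 hsub, card_empty] at this
    omega
  | insert v A hv ih =>
    have hstep := mul_card_weakColorings_le_two_mul hT hdeg hN d A hv
    have hpos := Nat.mul_pos d.pos (card_pos.2 ih)
    exact card_pos.1 (by omega)

theorem exists_coloring_forall_exists_ne (hT : ∀ t ∈ T, #t = k + 1)
    (hdeg : ∀ v, #{t ∈ T | v ∈ t} ≤ Δ) (hN : 2 ^ (k + 1) * Δ ≤ N ^ k) (hN0 : 0 < N) :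
    ∃ f : V → Fin N, ∀ t ∈ T, ∃ u ∈ t, ∃ w ∈ t, f u ≠ f w := by
  obtain ⟨f, hf⟩ := weakColorings_nonempty hT hdeg hN ⟨0, hN0⟩ univ
  exact ⟨f, fun t ht => (mem_weakColorings.1 hf).2 t ht (subset_univ t)⟩

end

theorem exists_uniform_shrink [DecidableEq V] (E : Finset (Finset V)) (k : ℕ) :
    ∃ T : Finset (Finset V), (∀ t ∈ T, #t = k + 1) ∧
      (∀ v, #{t ∈ T | v ∈ t} ≤ #{S ∈ E | v ∈ S}) ∧
      ∀ S ∈ E, k + 1 ≤ #S → ∃ t ∈ T, t ⊆ S := by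
  choose shrink hshrink using fun S : Finset V =>
    (em (k + 1 ≤ #S)).elim (fun h => (exists_subset_card_eq h).imp fun _ h' _ => h')
      fun h => ⟨∅, fun h' => absurd h' h⟩
  refine ⟨{S ∈ E | k + 1 ≤ #S}.image shrink, ?_, fun v => ?_, fun S hS hSk => ?_⟩
  · simp only [mem_image, mem_filter]
    rintro _ ⟨S, ⟨-, hSk⟩, rfl⟩
    exact (hshrink S hSk).2
  · rw [filter_image]
    refine card_image_le.trans (card_le_card fun S hS => ?_)
    simp only [mem_filter] at hS ⊢
    exact ⟨hS.1.1, (hshrink S hS.1.2).1 hS.2⟩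
  · exact ⟨shrink S, mem_image_of_mem _ (mem_filter.2 ⟨hS, hSk⟩), (hshrink S hSk).1⟩

end

theorem exists_nat_two_pow_mul_le_pow {k Δ : ℕ} (hk : 1 ≤ k) (hΔ : 1 ≤ Δ) :
    ∃ N : ℕ, 0 < N ∧ 2 ^ (k + 1) * Δ ≤ N ^ k ∧ (N : ℝ) ≤ 8 * (Δ : ℝ) ^ ((1 : ℝ) / k) := by
  set x := (Δ : ℝ) ^ ((1 : ℝ) / k)
  have hΔ' : (1 : ℝ) ≤ Δ := by exact_mod_cast hΔ
  have hx : 1 ≤ x := Real.one_le_rpow hΔ' (by positivity)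
  have hxk : x ^ k = Δ := by
    simp only [x, one_div]; exact Real.rpow_inv_natCast_pow (by positivity) (by omega)
  have hceil : Δ ≤ ⌈x⌉₊ ^ k := by
    have : (Δ : ℝ) ≤ (⌈x⌉₊ : ℝ) ^ k := hxk ▸ pow_le_pow_left₀ (by positivity) (Nat.le_ceil x) k
    exact_mod_cast this
  refine ⟨4 * ⌈x⌉₊, by positivity, ?_, ?_⟩
  · have h4 : 2 ^ (k + 1) ≤ 4 ^ k :=
      calc 2 ^ (k + 1) ≤ 2 ^ (2 * k) := Nat.pow_le_pow_right (by norm_num) (by omega)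
        _ = 4 ^ k := by rw [pow_mul]; norm_num
    rw [mul_pow]
    exact Nat.mul_le_mul h4 hceil
  · have := Nat.ceil_lt_add_one (by positivity : (0 : ℝ) ≤ x)
    push_cast
    linarith

/-- For any hypergraph of maximum degree `Δ ≥ 1` and any `k > 1`, there is a
`(k+1)`-weak coloring with at most `13 · Δ^{1/k}` colors: a coloring in which no
hyperedge of size at least `k+1` is monochromatic. -/
theorem stmt9 {V : Type*} [Fintype V] [DecidableEq V] (E : Finset (Finset V))
    (k Δ : ℕ) (hk : 1 < k) (hΔ : 1 ≤ Δ)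
    (hdeg : ∀ v : V, (E.filter fun S => v ∈ S).card ≤ Δ) :
    ∃ c : V → ℕ,
      ((Finset.univ.image c).card : ℝ) ≤ 13 * (Δ : ℝ) ^ ((1 : ℝ) / k) ∧
      ∀ S ∈ E, k + 1 ≤ S.card → ∃ u ∈ S, ∃ w ∈ S, c u ≠ c w := by
  obtain ⟨N, hN0, hN, hN8⟩ := exists_nat_two_pow_mul_le_pow hk.le hΔ
  obtain ⟨T, hTk, hTdeg, hET⟩ := exists_uniform_shrink E k
  obtain ⟨f, hf⟩ :=
    exists_coloring_forall_exists_ne hTk (fun v => (hTdeg v).trans (hdeg v)) hN hN0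
  refine ⟨fun v => f v, ?_, fun S hS hSk => ?_⟩
  · have hcard : #(univ.image fun v => (f v : ℕ)) ≤ N :=
      (card_le_card (image_subset_iff.2 fun v _ => mem_range.2 (f v).2)).trans
        (card_range N).le
    have : (0 : ℝ) ≤ (Δ : ℝ) ^ ((1 : ℝ) / k) := by positivity
    calc (#(univ.image fun v => (f v : ℕ)) : ℝ) ≤ N := by exact_mod_cast hcard
      _ ≤ 13 * (Δ : ℝ) ^ ((1 : ℝ) / k) := by linarith
  · obtain ⟨t, htT, htS⟩ := hET S hS hSk
    obtain ⟨u, hu, w, hw, huw⟩ := hf t htT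
    exact ⟨u, htS hu, w, htS hw, Fin.val_injective.ne huw⟩
end

section
/- Let H be a hypergraph with n vertices and at most m hyperedges, and let k > 1. Then the k-conflict-free chromatic number of H is O(m^{1/(k+1)} · log^{k/(k+1)} n). -/
/-!
Peel off colour classes. On a set `W` of `N` vertices the traces `S ∩ W` with more than `k`
vertices number at most `m`; averaging over the `r`-subsets of `W` and then deleting a vertex of
every trace inside the chosen subset leaves at least `r / 2` vertices containing no such trace,
provided `2 m r^k ≤ (N - k)^(k+1)` (Turán's bound). This set gets a fresh colour and the rest of
`W` is coloured recursively: an edge either keeps a vertex in the rest, where the recursion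
supplies its rare colour, or meets `W` in at most `k` vertices, all of the fresh colour.

With `u = m^(1/(k+1))`, `v = (log n)^(1/(k+1))` and `r ≈ N v / (4u)`, every step removes a
fraction `v / (16u)` of the `N > s ≈ u v^k` remaining vertices, so there are at most
`(16u / v) ∑_{s < i ≤ n} 1/i ≤ (16u / v)(1 + log n) = O(u v^k)` steps, and the last `s` vertices
get distinct colours. When `m ≤ log n`, distinct colours on one representative of each edge
suffice.
-/

open Finset

theorem Nat.choose_mul_pow_le (n r j : ℕ) :
    r.choose j * (n + 1 - j) ^ j ≤ n.choose j * r ^ j := by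
  refine Nat.le_of_mul_le_mul_left ?_ j.factorial_pos
  calc j.factorial * (r.choose j * (n + 1 - j) ^ j) = r.descFactorial j * (n + 1 - j) ^ j := by
        rw [Nat.descFactorial_eq_factorial_mul_choose, mul_assoc]
    _ ≤ r ^ j * n.descFactorial j :=
        Nat.mul_le_mul (r.descFactorial_le_pow j) (n.pow_sub_le_descFactorial j)
    _ = j.factorial * (n.choose j * r ^ j) := by
        rw [Nat.descFactorial_eq_factorial_mul_choose]; ring

lemma Real.rpow_one_div_succ_pow {x : ℝ} (hx : 0 ≤ x) (k : ℕ) :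
    (x ^ ((1 : ℝ) / (k + 1))) ^ (k + 1) = x := by
  rw [← Real.rpow_natCast, ← Real.rpow_mul hx]
  push_cast
  rw [one_div_mul_cancel (by positivity), Real.rpow_one]

lemma Real.rpow_div_succ {x : ℝ} (hx : 0 ≤ x) (k : ℕ) :
    x ^ ((k : ℝ) / (k + 1)) = (x ^ ((1 : ℝ) / (k + 1))) ^ k := by
  rw [← Real.rpow_natCast, ← Real.rpow_mul hx, one_div_mul_eq_div]

section Coloring

variable {V : Type*}

def IsConflictFreeOn (k : ℕ) (c : V → ℕ) (S : Finset V) : Prop :=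
  ∃ i, 1 ≤ #(S.filter fun v => c v = i) ∧ #(S.filter fun v => c v = i) ≤ k

lemma isConflictFreeOn_of_unique {k : ℕ} {c : V → ℕ} {S : Finset V} (hk : 1 ≤ k) {w : V}
    (hw : w ∈ S) (hunique : ∀ v ∈ S, c v = c w → v = w) : IsConflictFreeOn k c S := by
  have : S.filter (fun v => c v = c w) = {w} :=
    eq_singleton_iff_unique_mem.2 ⟨mem_filter.2 ⟨hw, rfl⟩,
      fun v hv => hunique v (mem_filter.1 hv).1 (mem_filter.1 hv).2⟩
  exact ⟨c w, by simp [this, hk]⟩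

variable [DecidableEq V]

lemma exists_injOn_nat (W : Finset V) : ∃ c : V → ℕ, Set.InjOn c W :=
  ⟨W.toList.idxOf, fun _ hu _ _ h => (List.idxOf_inj (mem_toList.2 hu)).1 h⟩

def prependColor (C : Finset V) (c : V → ℕ) (v : V) : ℕ :=
  if v ∈ C then 0 else c v + 1

lemma card_image_prependColor_le (C W : Finset V) (c : V → ℕ) :
    #(W.image (prependColor C c)) ≤ #((W \ C).image c) + 1 := by
  calc #(W.image (prependColor C c)) ≤ #(insert 0 (((W \ C).image c).image (· + 1))) := by
        refine card_le_card fun x hx => ?_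
        obtain ⟨v, hv, rfl⟩ := mem_image.1 hx
        by_cases hvC : v ∈ C
        · simp [prependColor, hvC]
        · simp only [prependColor, hvC, if_false, mem_insert, mem_image]
          exact Or.inr ⟨c v, ⟨v, mem_sdiff.2 ⟨hv, hvC⟩, rfl⟩, rfl⟩
    _ ≤ #((W \ C).image c) + 1 := (card_insert_le _ _).trans (by grw [card_image_le])

lemma isConflictFreeOn_prependColor_of_sdiff {k : ℕ} {c : V → ℕ} {C T : Finset V}
    (h : IsConflictFreeOn k c (T \ C)) : IsConflictFreeOn k (prependColor C c) T := by
  obtain ⟨i, hi⟩ := h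
  have : T.filter (fun v => prependColor C c v = i + 1) = (T \ C).filter (c · = i) := by
    ext v
    simp only [mem_filter, mem_sdiff]
    by_cases hv : v ∈ C <;> simp [prependColor, hv]
  exact ⟨i + 1, by rwa [this]⟩

lemma isConflictFreeOn_prependColor_of_subset {k : ℕ} {C T : Finset V} (c : V → ℕ)
    (hTC : T ⊆ C) (hT : T.Nonempty) (hTk : #T ≤ k) :
    IsConflictFreeOn k (prependColor C c) T := by
  have : T.filter (fun v => prependColor C c v = 0) = T :=
    filter_true_of_mem fun v hv => if_pos (hTC hv)
  exact ⟨0, by rw [this]; exact ⟨hT.card_pos, hTk⟩⟩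

end Coloring

section Independent

variable {V : Type*}

def IsIndependent (F : Finset (Finset V)) (C : Finset V) : Prop := ∀ T ∈ F, ¬ T ⊆ C

variable [DecidableEq V]

lemma exists_card_le_forall_not_disjoint (G : Finset (Finset V))
    (hG : ∀ T ∈ G, T.Nonempty) : ∃ D : Finset V, #D ≤ #G ∧ ∀ T ∈ G, ¬ Disjoint T D := by
  induction G using Finset.induction_on with
  | empty => exact ⟨∅, by simp, by simp⟩
  | insert T G hT ih =>
    obtain ⟨D, hD, hDG⟩ := ih fun T' hT' => hG T' (mem_insert_of_mem hT')
    obtain ⟨v, hv⟩ := hG T (mem_insert_self T G)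
    refine ⟨insert v D, ?_, ?_⟩
    · grw [card_insert_le, hD, card_insert_of_notMem hT]
    · rintro T' hT'
      rcases mem_insert.1 hT' with rfl | hT'
      · exact not_disjoint_iff.2 ⟨v, hv, mem_insert_self v D⟩
      · exact fun h => hDG T' hT' (h.mono_right (subset_insert v D))

lemma exists_isIndependent_card_le_add_card_filter (C : Finset V) {F : Finset (Finset V)}
    (hF : ∀ T ∈ F, T.Nonempty) :
    ∃ C' ⊆ C, #C ≤ #C' + #{T ∈ F | T ⊆ C} ∧ IsIndependent F C' := by
  obtain ⟨D, hD, hDF⟩ := exists_card_le_forall_not_disjoint {T ∈ F | T ⊆ C}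
    fun T hT => hF T (mem_filter.1 hT).1
  refine ⟨C \ D, sdiff_subset, card_le_card_sdiff_add_card.trans (by gcongr), ?_⟩
  intro T hT hTC
  exact hDF T (mem_filter.2 ⟨hT, hTC.trans sdiff_subset⟩)
    (disjoint_of_subset_left hTC disjoint_sdiff_self_left)

lemma card_filter_powersetCard_superset_le {W T : Finset V} {j r : ℕ} (hT : j ≤ #T)
    (hjr : j ≤ r) : #{C ∈ W.powersetCard r | T ⊆ C} ≤ (#W - j).choose (r - j) := by
  obtain ⟨T', hT'T, hT'⟩ := exists_subset_card_eq hT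
  calc #{C ∈ W.powersetCard r | T ⊆ C} ≤ #{C ∈ W.powersetCard r | T' ⊆ C} :=
        card_le_card (monotone_filter_right _ fun C _ h => hT'T.trans h)
    _ ≤ (#W - j).choose (r - j) := by
        by_cases hT'W : T' ⊆ W
        · rw [card_filter_powersetCard_subset T' W r hT'W (hT' ▸ hjr), hT']
        · rw [filter_false_of_mem fun C hC hT'C =>
            hT'W (hT'C.trans (mem_powersetCard.1 hC).1), card_empty]
          exact Nat.zero_le _

lemma exists_subset_card_eq_card_filter_subset_mul_le {W : Finset V} {F : Finset (Finset V)}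
    {j r : ℕ} (hF : ∀ T ∈ F, j ≤ #T) (hr : r ≤ #W) :
    ∃ C ⊆ W, #C = r ∧ #{T ∈ F | T ⊆ C} * (#W).choose j ≤ #F * r.choose j := by
  obtain hrj | hjr := lt_or_ge r j
  · obtain ⟨C, hCW, hC⟩ := exists_subset_card_eq hr
    refine ⟨C, hCW, hC, ?_⟩
    rw [filter_false_of_mem fun T hT hTC =>
      (card_le_card hTC).not_gt (hC ▸ hrj.trans_le (hF T hT))]
    simp
  set P := W.powersetCard r
  set B := (#W - j).choose (r - j)
  have hdouble : ∑ C ∈ P, #{T ∈ F | T ⊆ C} ≤ #F * B := by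
    calc ∑ C ∈ P, #{T ∈ F | T ⊆ C} = ∑ T ∈ F, #{C ∈ P | T ⊆ C} := by
          simp only [card_filter]; exact sum_comm
      _ ≤ ∑ _T ∈ F, B :=
          sum_le_sum fun T hT => card_filter_powersetCard_superset_le (hF T hT) hjr
      _ = #F * B := by rw [sum_const, smul_eq_mul]
  obtain ⟨C, hCP, hC⟩ : ∃ C ∈ P, #{T ∈ F | T ⊆ C} * #P ≤ #F * B := by
    refine exists_le_of_sum_le (powersetCard_nonempty.2 hr) ?_
    rw [← sum_mul, sum_const, smul_eq_mul]
    exact Nat.mul_le_mul_right _ hdouble |>.trans_eq (mul_comm _ _)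
  obtain ⟨hCW, hCr⟩ := mem_powersetCard.1 hCP
  refine ⟨C, hCW, hCr,
    Nat.le_of_mul_le_mul_right ?_ (Nat.choose_pos (Nat.sub_le_sub_right hr j))⟩
  calc #{T ∈ F | T ⊆ C} * (#W).choose j * B = #{T ∈ F | T ⊆ C} * #P * r.choose j := by
        rw [card_powersetCard, mul_assoc, mul_assoc, Nat.choose_mul hjr]
    _ ≤ #F * r.choose j * B := by nlinarith

theorem exists_isIndependent_of_pow_le {W : Finset V} {F : Finset (Finset V)} {k r : ℕ}
    (hF : ∀ T ∈ F, k + 1 ≤ #T) (hkW : k < #W) (hr : r ≤ #W)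
    (hFr : 2 * #F * r ^ k ≤ (#W - k) ^ (k + 1)) :
    ∃ C ⊆ W, r ≤ 2 * #C ∧ IsIndependent F C := by
  obtain ⟨C₀, hC₀W, hC₀, hbad⟩ := exists_subset_card_eq_card_filter_subset_mul_le hF hr
  obtain ⟨C, hCC₀, hC, hfree⟩ := exists_isIndependent_card_le_add_card_filter C₀
    fun T hT => card_pos.1 (by have := hF T hT; omega)
  set bad := #{T ∈ F | T ⊆ C₀}
  have hpow : 0 < (#W - k) ^ (k + 1) := pow_pos (Nat.sub_pos_of_lt hkW) _
  have hbad_pow : bad * (#W - k) ^ (k + 1) ≤ #F * r ^ (k + 1) := by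
    refine Nat.le_of_mul_le_mul_right ?_ (Nat.choose_pos (k := k + 1) hkW)
    have := Nat.choose_mul_pow_le (#W) r (k + 1)
    rw [Nat.add_sub_add_right] at this
    calc bad * (#W - k) ^ (k + 1) * (#W).choose (k + 1)
        = bad * (#W).choose (k + 1) * (#W - k) ^ (k + 1) := by ring
      _ ≤ #F * r.choose (k + 1) * (#W - k) ^ (k + 1) := Nat.mul_le_mul_right _ hbad
      _ ≤ #F * r ^ (k + 1) * (#W).choose (k + 1) := by nlinarith
  have hbad_half : 2 * bad ≤ r := by
    refine Nat.le_of_mul_le_mul_right ?_ hpow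
    calc 2 * bad * (#W - k) ^ (k + 1) ≤ 2 * (#F * r ^ (k + 1)) := by
          rw [mul_assoc]; exact Nat.mul_le_mul_left 2 hbad_pow
      _ = 2 * #F * r ^ k * r := by ring
      _ ≤ r * (#W - k) ^ (k + 1) := by nlinarith
  exact ⟨C, hCC₀.trans hC₀W, by omega, hfree⟩

theorem exists_isIndependent_card_le_mul {W : Finset V} {F : Finset (Finset V)} {k : ℕ}
    {a : ℝ} (hF : ∀ T ∈ F, k + 1 ≤ #T) (ha : a ≤ 1 / 2) (hkW : 2 * k ≤ #W)
    (haW : 1 ≤ a * #W) (hFW : 2 ^ (k + 2) * #F * a ^ k ≤ #W) :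
    ∃ C ⊆ W, (#W : ℝ) ≤ 4 / a * #C ∧ IsIndependent F C := by
  set N := #W
  have ha0 : 0 < a := pos_of_mul_pos_left (one_pos.trans_le haW) N.cast_nonneg
  set r := ⌊a * N⌋₊
  have hr1 : 1 ≤ r := Nat.le_floor (by simpa using haW)
  have hraN : (r : ℝ) ≤ a * N := Nat.floor_le (by positivity)
  have hrN : 2 * r ≤ N := by
    have : (2 * r : ℝ) ≤ N := by nlinarith
    exact_mod_cast this
  have hFr : 2 * #F * r ^ k ≤ (N - k) ^ (k + 1) := by
    have hN : (N : ℝ) / 2 ≤ ((N - k : ℕ) : ℝ) := by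
      rw [Nat.cast_sub (by omega)]
      have : (2 * k : ℝ) ≤ N := by exact_mod_cast hkW
      linarith
    have : (2 * #F * r ^ k : ℝ) ≤ ((N - k : ℕ) : ℝ) ^ (k + 1) :=
      calc (2 * #F * r ^ k : ℝ) ≤ 2 * #F * (a * N) ^ k := by gcongr
        _ = 2 ^ (k + 2) * #F * a ^ k * N ^ k / 2 ^ (k + 1) := by field_simp; ring
        _ ≤ N * N ^ k / 2 ^ (k + 1) := by gcongr
        _ = (N / 2) ^ (k + 1) := by rw [div_pow, pow_succ, pow_succ]; ring
        _ ≤ ((N - k : ℕ) : ℝ) ^ (k + 1) := by gcongr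
    exact_mod_cast this
  obtain ⟨C, hCW, hrC, hfree⟩ := exists_isIndependent_of_pow_le hF (by omega) (by omega) hFr
  refine ⟨C, hCW, ?_, hfree⟩
  have hrC' : (r : ℝ) ≤ 2 * #C := by exact_mod_cast hrC
  have hr1' : (1 : ℝ) ≤ r := by exact_mod_cast hr1
  have : a * N < r + 1 := Nat.lt_floor_add_one _
  rw [div_mul_eq_mul_div, le_div_iff₀ ha0]
  linarith

end Independent

section Peeling

variable {V : Type*} [DecidableEq V]

noncomputable def peelingBound (s : ℕ) (D : ℝ) (N : ℕ) : ℝ :=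
  min N s + D * ∑ i ∈ Ioc s N, (i : ℝ)⁻¹

lemma one_le_mul_sum_Ioc_inv {N' N : ℕ} {D : ℝ} (hN : N' < N)
    (hD : (N : ℝ) ≤ D * (N - N' : ℕ)) : 1 ≤ D * ∑ i ∈ Ioc N' N, (i : ℝ)⁻¹ := by
  have hN0 : (0 : ℝ) < N := by exact_mod_cast N'.zero_le.trans_lt hN
  have hD0 : 0 < D := pos_of_mul_pos_left (hN0.trans_le hD) (Nat.cast_nonneg _)
  have hsum : (N - N' : ℕ) * (N : ℝ)⁻¹ ≤ ∑ i ∈ Ioc N' N, (i : ℝ)⁻¹ := by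
    rw [← Nat.card_Ioc, ← nsmul_eq_mul]
    exact card_nsmul_le_sum _ _ _ fun i hi =>
      inv_anti₀ (by exact_mod_cast N'.zero_le.trans_lt (mem_Ioc.1 hi).1)
        (by exact_mod_cast (mem_Ioc.1 hi).2)
  calc (1 : ℝ) = (N : ℝ)⁻¹ * N := (inv_mul_cancel₀ hN0.ne').symm
    _ ≤ (N : ℝ)⁻¹ * (D * (N - N' : ℕ)) := by gcongr
    _ = D * ((N - N' : ℕ) * (N : ℝ)⁻¹) := by ring
    _ ≤ D * ∑ i ∈ Ioc N' N, (i : ℝ)⁻¹ := by gcongr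

lemma one_add_peelingBound_le {s N' N : ℕ} {D : ℝ} (hsN : s < N) (hN : N' < N)
    (hD : (N : ℝ) ≤ D * (N - N' : ℕ)) : 1 + peelingBound s D N' ≤ peelingBound s D N := by
  have hstep := one_le_mul_sum_Ioc_inv hN hD
  have hD0 : 0 ≤ D := by
    by_contra! h
    have : 0 ≤ ∑ i ∈ Ioc N' N, (i : ℝ)⁻¹ := sum_nonneg fun i _ => by positivity
    nlinarith
  unfold peelingBound
  rw [min_eq_right hsN.le]
  obtain hN's | hsN' := le_or_gt N' s
  · rw [min_eq_left (by exact_mod_cast hN's), Ioc_eq_empty (by omega), sum_empty, mul_zero,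
      add_zero]
    obtain hlt | rfl := hN's.lt_or_eq
    · have : (N' : ℝ) + 1 ≤ s := by exact_mod_cast hlt
      have : 0 ≤ D * ∑ i ∈ Ioc s N, (i : ℝ)⁻¹ :=
        mul_nonneg hD0 (sum_nonneg fun i _ => by positivity)
      linarith
    · linarith
  · rw [min_eq_right (by exact_mod_cast hsN'.le), ← sum_Ioc_consecutive _ hsN'.le hN.le]
    linarith

theorem exists_isConflictFreeOn_card_image_le_peelingBound {E : Finset (Finset V)} {k s : ℕ}
    {D : ℝ} (hk : 1 ≤ k)
    (hpeel : ∀ W : Finset V, s < #W → ∃ C ⊆ W, (#W : ℝ) ≤ D * #C ∧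
      ∀ S ∈ E, k < #(S ∩ W) → ¬ S ∩ W ⊆ C)
    (W : Finset V) :
    ∃ c : V → ℕ, #(W.image c) ≤ peelingBound s D #W ∧
      ∀ S ∈ E, (S ∩ W).Nonempty → IsConflictFreeOn k c (S ∩ W) := by
  induction hN : #W using Nat.strong_induction_on generalizing W with
  | _ N ih =>
  obtain hNs | hsN := le_or_gt N s
  · obtain ⟨c, hc⟩ := exists_injOn_nat W
    refine ⟨c, ?_, fun S _ ⟨w, hw⟩ => isConflictFreeOn_of_unique hk hw
      fun v hv hcv => hc (mem_inter.1 hv).2 (mem_inter.1 hw).2 hcv⟩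
    rw [card_image_of_injOn hc, peelingBound, hN, Ioc_eq_empty (by omega)]
    simp [hNs]
  obtain ⟨C, hCW, hDC, hfree⟩ := hpeel W (hN ▸ hsN)
  have hCN : #C ≤ N := hN ▸ card_le_card hCW
  have hW' : #(W \ C) = N - #C := by rw [card_sdiff_of_subset hCW, hN]
  have hC : 0 < #C := by
    by_contra! h
    simp only [nonpos_iff_eq_zero.1 h, Nat.cast_zero, mul_zero, hN, Nat.cast_nonpos] at hDC
    omega
  obtain ⟨c, hc, hcf⟩ := ih _ (by omega) (W \ C) hW'
  refine ⟨prependColor C c, ?_, fun S hS hSW => ?_⟩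
  · calc (#(W.image (prependColor C c)) : ℝ) ≤ #((W \ C).image c) + 1 := by
          exact_mod_cast card_image_prependColor_le C W c
      _ ≤ 1 + peelingBound s D (N - #C) := by linarith
      _ ≤ peelingBound s D N :=
          one_add_peelingBound_le hsN (by omega) (by rwa [Nat.sub_sub_self hCN, ← hN])
  · by_cases hSW' : (S ∩ (W \ C)).Nonempty
    · exact isConflictFreeOn_prependColor_of_sdiff (by rw [inter_sdiff_assoc]; exact hcf S hS hSW')
    · have hSC : S ∩ W ⊆ C := fun v hv => by
        by_contra hvC
        exact hSW' ⟨v, mem_inter.2 ⟨(mem_inter.1 hv).1, mem_sdiff.2 ⟨(mem_inter.1 hv).2, hvC⟩⟩⟩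
      exact isConflictFreeOn_prependColor_of_subset c hSC hSW
        (not_lt.1 fun h => hfree S hS h hSC)

lemma peelingBound_le {D : ℝ} (hD : 0 ≤ D) (s N : ℕ) :
    peelingBound s D N ≤ s + D * (1 + Real.log N) := by
  have hsum : ∑ i ∈ Ioc s N, (i : ℝ)⁻¹ ≤ 1 + Real.log N :=
    calc ∑ i ∈ Ioc s N, (i : ℝ)⁻¹ ≤ ∑ i ∈ Icc 1 N, (i : ℝ)⁻¹ :=
          sum_le_sum_of_subset_of_nonneg
            (fun i hi => mem_Icc.2 ⟨by have := (mem_Ioc.1 hi).1; omega, (mem_Ioc.1 hi).2⟩)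
            fun i _ _ => by positivity
      _ = harmonic N := by simp [harmonic_eq_sum_Icc]
      _ ≤ 1 + Real.log N := harmonic_le_one_add_log N
  unfold peelingBound
  gcongr
  exact_mod_cast min_le_right N s

end Peeling

section Hypergraph

variable {V : Type*} [Fintype V] [DecidableEq V]

theorem exists_isConflictFreeOn_card_image_le_card_add_one {k : ℕ} (hk : 1 ≤ k)
    (E : Finset (Finset V)) :
    ∃ c : V → ℕ, #(univ.image c) ≤ #E + 1 ∧ ∀ S ∈ E, S.Nonempty → IsConflictFreeOn k c S := by
  obtain ⟨R, hR, hRE⟩ := exists_card_le_forall_not_disjoint {S ∈ E | S.Nonempty}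
    fun S hS => (mem_filter.1 hS).2
  obtain ⟨f, hf⟩ := exists_injOn_nat R
  refine ⟨prependColor Rᶜ f, ?_, fun S hS hne => ?_⟩
  · calc #(univ.image (prependColor Rᶜ f)) ≤ #((univ \ Rᶜ).image f) + 1 :=
          card_image_prependColor_le _ _ _
      _ ≤ #E + 1 := by
          grw [card_image_le, sdiff_compl, inf_eq_inter, univ_inter, hR, card_filter_le]
  · obtain ⟨w, hwS, hwR⟩ := not_disjoint_iff.1 (hRE S (mem_filter.2 ⟨hS, hne⟩))
    refine isConflictFreeOn_of_unique hk hwS fun v _ hvw => ?_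
    by_cases hvR : v ∈ R
    · simp only [prependColor, mem_compl, hvR, hwR, not_true, if_false,
        Nat.add_right_cancel_iff] at hvw
      exact hf hvR hwR hvw
    · simp [prependColor, hvR, hwR] at hvw

theorem exists_isConflictFreeOn_card_image_le_add_mul_log {E : Finset (Finset V)} {k s : ℕ}
    {a : ℝ} (hk : 1 ≤ k) (ha : a ≤ 1 / 2) (hks : 2 * k ≤ s) (has : 1 ≤ a * s)
    (hEs : 2 ^ (k + 2) * #E * a ^ k ≤ s) :
    ∃ c : V → ℕ, (#(univ.image c) : ℝ) ≤ s + 4 / a * (1 + Real.log (Fintype.card V)) ∧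
      ∀ S ∈ E, S.Nonempty → IsConflictFreeOn k c S := by
  have ha0 : 0 < a := pos_of_mul_pos_left (one_pos.trans_le has) s.cast_nonneg
  have hpeel : ∀ W : Finset V, s < #W → ∃ C ⊆ W, (#W : ℝ) ≤ 4 / a * #C ∧
      ∀ S ∈ E, k < #(S ∩ W) → ¬ S ∩ W ⊆ C := by
    intro W hsW
    have hsW' : (s : ℝ) ≤ #W := by exact_mod_cast hsW.le
    set F := {S ∈ E | k < #(S ∩ W)}.image (· ∩ W)
    have hF : ∀ T ∈ F, k + 1 ≤ #T := by
      simp only [F, mem_image, mem_filter]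
      rintro _ ⟨S, ⟨_, hS⟩, rfl⟩
      exact hS
    have hFE : (#F : ℝ) ≤ #E := by exact_mod_cast card_image_le.trans (card_filter_le _ _)
    obtain ⟨C, hCW, hC, hfree⟩ := exists_isIndependent_card_le_mul hF ha (by omega)
      (has.trans (by gcongr)) (le_trans (by gcongr) (hEs.trans hsW'))
    exact ⟨C, hCW, hC, fun S hS hSW => hfree _ (mem_image_of_mem _ (mem_filter.2 ⟨hS, hSW⟩))⟩
  obtain ⟨c, hc, hcf⟩ := exists_isConflictFreeOn_card_image_le_peelingBound hk hpeel univ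
  refine ⟨c, hc.trans (peelingBound_le (by positivity) _ _), fun S hS hne => ?_⟩
  simpa using hcf S hS (by simpa using hne)

lemma natCeil_add_mul_one_add_le_mul_pow {k : ℕ} {u v L : ℝ} (hv0 : 0 < v) (hvu : v < u)
    (hL : L ≤ v ^ (k + 1)) (hv : 1 / 2 ≤ v ^ (k + 1)) :
    ((⌈2 * u * v ^ k + 4 * u / v⌉₊ + 2 * k : ℕ) : ℝ) + 4 / (v / (4 * u)) * (1 + L) ≤
      (4 * k + 60) * u * v ^ k := by
  have hu0 : 0 < u := hv0.trans hvu
  have hρ0 : 0 ≤ u / v := by positivity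
  have hw : u / v * v ^ (k + 1) = u * v ^ k := by rw [pow_succ]; field_simp
  have hρ : u / v ≤ 2 * (u * v ^ k) := by nlinarith
  have hw1 : 1 ≤ 2 * (u * v ^ k) := by
    have : v * v ^ k ≤ u * v ^ k := by gcongr
    rw [← pow_succ'] at this
    linarith
  have hceil := Nat.ceil_lt_add_one (show 0 ≤ 2 * u * v ^ k + 4 * u / v by positivity)
  have hdiv : 4 * u / v = 4 * (u / v) := mul_div_assoc _ _ _
  have h4a : 4 / (v / (4 * u)) = 16 * (u / v) := by field_simp; ring
  have hL' : u / v * (1 + L) ≤ u / v + u * v ^ k := by nlinarith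
  have hk := mul_le_mul_of_nonneg_left hw1 k.cast_nonneg
  push_cast
  rw [h4a]
  linarith

theorem exists_isConflictFreeOn_card_image_le_mul_pow_of_lt {E : Finset (Finset V)} {k : ℕ}
    {u v : ℝ} (hk : 1 ≤ k) (hv0 : 0 < v) (hvu : v < u) (hv : 1 / 2 ≤ v ^ (k + 1))
    (hE : (#E : ℝ) ≤ u ^ (k + 1)) (hV : Real.log (Fintype.card V) ≤ v ^ (k + 1)) :
    ∃ c : V → ℕ, (#(univ.image c) : ℝ) ≤ (4 * k + 60) * u * v ^ k ∧
      ∀ S ∈ E, S.Nonempty → IsConflictFreeOn k c S := by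
  have hu0 : 0 < u := hv0.trans hvu
  set s := ⌈2 * u * v ^ k + 4 * u / v⌉₊ + 2 * k
  have hs : 2 * u * v ^ k + 4 * u / v ≤ s :=
    (Nat.le_ceil _).trans (by exact_mod_cast Nat.le_add_right _ _)
  have has : 1 ≤ v / (4 * u) * s := by
    have : v / (4 * u) * (4 * u / v) = 1 := by field_simp
    have : 0 ≤ 2 * u * v ^ k := by positivity
    nlinarith [show 0 < v / (4 * u) by positivity]
  have hEs : 2 ^ (k + 2) * #E * (v / (4 * u)) ^ k ≤ s := by
    have h2k : (2 : ℝ) ≤ 2 ^ k := le_self_pow₀ one_le_two (by omega)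
    calc 2 ^ (k + 2) * (#E : ℝ) * (v / (4 * u)) ^ k
        ≤ 2 ^ (k + 2) * u ^ (k + 1) * (v / (4 * u)) ^ k := by gcongr
      _ = 4 * u * v ^ k / 2 ^ k := by
          rw [div_pow, mul_pow, show (4 : ℝ) ^ k = 2 ^ k * 2 ^ k by rw [← mul_pow]; norm_num]
          field_simp
          ring
      _ ≤ 2 * u * v ^ k := by
          rw [div_le_iff₀ (by positivity)]
          have : 0 ≤ u * v ^ k := by positivity
          nlinarith
      _ ≤ s := by linarith [show 0 ≤ 4 * u / v by positivity]
  obtain ⟨c, hc, hcf⟩ := exists_isConflictFreeOn_card_image_le_add_mul_log hk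
    (div_le_of_le_mul₀ (by positivity) (by norm_num) (by linarith)) (Nat.le_add_left _ _) has hEs
  exact ⟨c, hc.trans (natCeil_add_mul_one_add_le_mul_pow hv0 hvu hV hv), hcf⟩

theorem exists_isConflictFreeOn_card_image_le_mul_pow {E : Finset (Finset V)} {k : ℕ} {u v : ℝ}
    (hk : 1 ≤ k) (hu : 1 ≤ u) (hv0 : 0 < v) (hv : 1 / 2 ≤ v ^ (k + 1))
    (hE : (#E : ℝ) ≤ u ^ (k + 1)) (hV : Real.log (Fintype.card V) ≤ v ^ (k + 1)) :
    ∃ c : V → ℕ, (#(univ.image c) : ℝ) ≤ (4 * k + 60) * u * v ^ k ∧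
      ∀ S ∈ E, S.Nonempty → IsConflictFreeOn k c S := by
  obtain huv | hvu := le_or_gt u v
  · obtain ⟨c, hc, hcf⟩ := exists_isConflictFreeOn_card_image_le_card_add_one hk E
    refine ⟨c, ?_, hcf⟩
    have huv' : u * u ^ k ≤ u * v ^ k := by gcongr
    have h1 : 1 ≤ u * u ^ k := one_le_mul_of_one_le_of_one_le hu (one_le_pow₀ hu)
    have : (0 : ℝ) ≤ 4 * k * (u * v ^ k) := by positivity
    have hc' : (#(univ.image c) : ℝ) ≤ #E + 1 := by exact_mod_cast hc
    rw [pow_succ'] at hE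
    nlinarith
  · exact exists_isConflictFreeOn_card_image_le_mul_pow_of_lt hk hv0 hvu hv hE hV

end Hypergraph

/-- For every `k > 1` there is a constant `C` such that every hypergraph on
`n ≥ 2` vertices with at most `m ≥ 1` hyperedges admits a `k`-conflict-free
coloring with at most `C · m^{1/(k+1)} · (log n)^{k/(k+1)}` colors. -/
theorem stmt10 (k : ℕ) (hk : 1 < k) :
    ∃ C : ℝ, 0 < C ∧
      ∀ (V : Type) [Fintype V] [DecidableEq V] (E : Finset (Finset V)) (n m : ℕ),
        Fintype.card V = n → 2 ≤ n → E.card ≤ m → 1 ≤ m →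
        ∃ c : V → ℕ,
          ((Finset.univ.image c).card : ℝ) ≤
            C * (m : ℝ) ^ ((1 : ℝ) / (k + 1)) * Real.log n ^ ((k : ℝ) / (k + 1)) ∧
          ∀ S ∈ E, S.Nonempty →
            ∃ i, 1 ≤ (S.filter fun v => c v = i).card ∧
              (S.filter fun v => c v = i).card ≤ k := by
  refine ⟨4 * k + 60, by positivity, fun V _ _ E n m hn h2n hEm hm => ?_⟩
  have hL : 1 / 2 ≤ Real.log n :=
    calc (1 / 2 : ℝ) ≤ Real.log 2 := by linarith [Real.log_two_gt_d9]
      _ ≤ Real.log n := Real.log_le_log two_pos (by exact_mod_cast h2n)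
  have hL0 : 0 ≤ Real.log n := by linarith
  have hv := Real.rpow_one_div_succ_pow hL0 k
  have hu := Real.rpow_one_div_succ_pow m.cast_nonneg k
  rw [Real.rpow_div_succ hL0 k]
  subst hn
  exact exists_isConflictFreeOn_card_image_le_mul_pow hk.le
    (Real.one_le_rpow (by exact_mod_cast hm) (by positivity)) (Real.rpow_pos_of_pos (by linarith) _)
    (by rw [hv]; exact hL) (by rw [hu]; exact_mod_cast hEm) hv.ge
end

section
/- Let k ≥ 1 and let G = (V, E) be any graph on t ≥ k+2 vertices. Form G' by adding, for each (k+1)-element subset K of V, a new vertex v_K adjacent exactly to the vertices of K. Then every k-CF coloring of G' uses at least t/k colors on V; consequently χ_{k-cf}(G') ≥ t/k. -/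
/-- The graph `G'` obtained from `G` by adding, for each `(k+1)`-subset `K` of the
vertices, a new vertex adjacent exactly to the vertices of `K`. -/
def addedGraph {V : Type*} (G : SimpleGraph V) (k : ℕ) :
    SimpleGraph (V ⊕ {K : Finset V // K.card = k + 1}) :=
  SimpleGraph.fromRel fun x y =>
    match x, y with
    | Sum.inl u, Sum.inl w => G.Adj u w
    | Sum.inl u, Sum.inr K => u ∈ K.1
    | _, _ => False

lemma addedGraph_adj_inr {V : Type*} (G : SimpleGraph V) (k : ℕ)
    (K : {K : Finset V // K.card = k + 1})
    (x : V ⊕ {K : Finset V // K.card = k + 1}) :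
    (addedGraph G k).Adj (Sum.inr K) x ↔ ∃ u ∈ K.1, x = Sum.inl u := by
  constructor
  · rintro ⟨hne, h | h⟩
    · cases x <;> simp_all
    · cases x with
      | inl u => exact ⟨u, h, rfl⟩
      | inr K' => simp_all
  · rintro ⟨u, hu, rfl⟩
    exact ⟨by simp, Or.inr hu⟩

/-- Let `k ≥ 1` and `G` a graph on `t ≥ k+2` vertices. Every `k`-CF coloring of
`G'` (the graph obtained by adding a vertex for each `(k+1)`-subset of `V`,
adjacent to that subset) uses at least `t/k` colors on the original vertices:
`t ≤ k ·` (number of colors used on `V`). -/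
theorem stmt12 {V : Type*} [Fintype V] [DecidableEq V] (G : SimpleGraph V)
    (k t : ℕ) (hk : 1 ≤ k) (ht : Fintype.card V = t) (htk : k + 2 ≤ t)
    (c : (V ⊕ {K : Finset V // K.card = k + 1}) → ℕ)
    (hcf : ∀ w, (∃ u, (addedGraph G k).Adj w u) →
      ∃ i, 1 ≤ {u | (addedGraph G k).Adj w u ∧ c u = i}.ncard ∧
        {u | (addedGraph G k).Adj w u ∧ c u = i}.ncard ≤ k) :
    t ≤ k * (Finset.univ.image fun v : V => c (Sum.inl v)).card := by
  classical
  have key : ∀ i, (Finset.univ.filter fun v : V => c (Sum.inl v) = i).card ≤ k := by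
    intro i
    by_contra h
    push_neg at h
    obtain ⟨K, hKsub, hKcard⟩ := Finset.exists_subset_card_eq (Nat.succ_le_of_lt h)
    have hKcol : ∀ u ∈ K, c (Sum.inl u) = i := by
      intro u hu
      have := hKsub hu
      simpa using this
    set w : V ⊕ {K : Finset V // K.card = k + 1} := Sum.inr ⟨K, hKcard⟩ with hw
    obtain ⟨u0, hu0⟩ := Finset.card_pos.mp (by omega : 0 < K.card)
    obtain ⟨j, hj1, hj2⟩ := hcf w ⟨Sum.inl u0,
      (addedGraph_adj_inr G k ⟨K, hKcard⟩ _).mpr ⟨u0, hu0, rfl⟩⟩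
    have hset : ∀ j', {u | (addedGraph G k).Adj w u ∧ c u = j'} =
        Sum.inl '' {u : V | u ∈ K ∧ c (Sum.inl u) = j'} := by
      intro j'
      rw [hw]
      ext x
      simp only [Set.mem_setOf_eq, Set.mem_image, addedGraph_adj_inr]
      constructor
      · rintro ⟨⟨u, hu, rfl⟩, hc⟩
        exact ⟨u, ⟨hu, hc⟩, rfl⟩
      · rintro ⟨u, ⟨hu, hc⟩, rfl⟩
        exact ⟨⟨u, hu, rfl⟩, hc⟩
    have hncard : ∀ j', {u | (addedGraph G k).Adj w u ∧ c u = j'}.ncard =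
        (K.filter fun u => c (Sum.inl u) = j').card := by
      intro j'
      rw [hset j', Set.ncard_image_of_injective _ Sum.inl_injective]
      have : {u : V | u ∈ K ∧ c (Sum.inl u) = j'} =
          ↑(K.filter fun u => c (Sum.inl u) = j') := by
        ext u; simp
      rw [this, Set.ncard_coe_finset]
    rw [hncard] at hj1 hj2
    by_cases hji : j = i
    · subst hji
      have : (K.filter fun u => c (Sum.inl u) = j) = K := by
        apply Finset.filter_true_of_mem
        exact hKcol
      rw [this, hKcard] at hj2
      omega
    · have : (K.filter fun u => c (Sum.inl u) = j) = ∅ := by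
        apply Finset.filter_false_of_mem
        intro u hu
        rw [hKcol u hu]
        exact fun hh => hji hh.symm
      rw [this] at hj1
      simp at hj1
  have hsum : Fintype.card V = ∑ i ∈ (Finset.univ.image fun v : V => c (Sum.inl v)),
      (Finset.univ.filter fun v : V => c (Sum.inl v) = i).card := by
    rw [← Finset.card_univ]
    exact Finset.card_eq_sum_card_fiberwise (fun v _ => Finset.mem_image_of_mem _ (Finset.mem_univ v))
  calc t = Fintype.card V := ht.symm
    _ = _ := hsum
    _ ≤ ∑ _i ∈ (Finset.univ.image fun v : V => c (Sum.inl v)), k :=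
        Finset.sum_le_sum fun i _ => key i
    _ = (Finset.univ.image fun v : V => c (Sum.inl v)).card * k := by
        rw [Finset.sum_const, smul_eq_mul]
    _ = k * _ := Nat.mul_comm _ _
end

section
/- Let k ≥ 1 and t ≥ k+2, and let n = t + C(t, k+1). Then n ≤ (e·t/(k+1))^{k+1}, and consequently t/k ≥ (1/e) · n^{1/(k+1)}; hence the graph G' obtained from any t-vertex graph by adding a vertex for each (k+1)-subset (adjacent to that subset) has n vertices and k-CF chromatic number Ω(n^{1/(k+1)}). -/
/-- `(1 + 1/m)^m ≤ e` for `m ≥ 1`. -/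
lemma aux_one_add_inv_pow_le (m : ℕ) (hm : 1 ≤ m) :
    ((m : ℝ) + 1) ^ m ≤ Real.exp 1 * (m : ℝ) ^ m := by
  have hm0 : (0 : ℝ) < m := by exact_mod_cast hm
  have h1 : (m : ℝ) + 1 ≤ (m : ℝ) * Real.exp (1 / m) := by
    have h := Real.add_one_le_exp (1 / (m : ℝ))
    have h2 : (m : ℝ) * (1 / m + 1) ≤ (m : ℝ) * Real.exp (1 / m) :=
      mul_le_mul_of_nonneg_left h hm0.le
    have h3 : (m : ℝ) * (1 / m + 1) = (m : ℝ) + 1 := by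
      rw [mul_add, mul_one, mul_one_div, div_self hm0.ne', add_comm]
    linarith
  calc ((m : ℝ) + 1) ^ m ≤ ((m : ℝ) * Real.exp (1 / m)) ^ m := by
        apply pow_le_pow_left₀ (by positivity) h1
    _ = (m : ℝ) ^ m * Real.exp (1 / m) ^ m := by rw [mul_pow]
    _ = (m : ℝ) ^ m * Real.exp (m * (1 / m)) := by rw [Real.exp_nat_mul]
    _ = Real.exp 1 * (m : ℝ) ^ m := by
        rw [mul_one_div, div_self hm0.ne', mul_comm]

/-- `2 m^m ≤ e^m · m!` for `m ≥ 2`. -/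
lemma aux_two_pow_le (m : ℕ) (hm : 2 ≤ m) :
    2 * (m : ℝ) ^ m ≤ Real.exp 1 ^ m * (Nat.factorial m : ℝ) := by
  induction m with
  | zero => omega
  | succ p ih =>
    rcases Nat.lt_or_ge p 2 with hp | hp
    · interval_cases p
      · omega
      · -- m = 2 : 2 * 4 ≤ e^2 * 2
        have he : (2 : ℝ) ≤ Real.exp 1 := by
          have := Real.add_one_le_exp (1 : ℝ); linarith
        have hf : ((Nat.factorial (1 + 1) : ℕ) : ℝ) = 2 := by norm_num [Nat.factorial]
        rw [hf]
        push_cast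
        ring_nf
        nlinarith
    · have ih' := ih hp
      have hp0 : (0 : ℝ) ≤ p := by positivity
      have key := aux_one_add_inv_pow_le p (by omega)
      have hfac : (Nat.factorial (p + 1) : ℝ) = ((p : ℝ) + 1) * Nat.factorial p := by
        rw [Nat.factorial_succ]; push_cast; ring
      have hcast : ((p + 1 : ℕ) : ℝ) = (p : ℝ) + 1 := by push_cast; ring
      rw [hcast, hfac]
      calc 2 * ((p : ℝ) + 1) ^ (p + 1) = ((p : ℝ) + 1) * (2 * ((p : ℝ) + 1) ^ p) := by ring
        _ ≤ ((p : ℝ) + 1) * (2 * (Real.exp 1 * (p : ℝ) ^ p)) := by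
            apply mul_le_mul_of_nonneg_left _ (by positivity)
            linarith
        _ = ((p : ℝ) + 1) * Real.exp 1 * (2 * (p : ℝ) ^ p) := by ring
        _ ≤ ((p : ℝ) + 1) * Real.exp 1 * (Real.exp 1 ^ p * Nat.factorial p) := by
            apply mul_le_mul_of_nonneg_left ih' (by positivity)
        _ = Real.exp 1 ^ (p + 1) * (((p : ℝ) + 1) * Nat.factorial p) := by ring

/-- `t ≤ C(t, j)` when `1 ≤ j` and `j + 1 ≤ t`. -/
lemma aux_le_choose (j : ℕ) (hj : 1 ≤ j) : ∀ t : ℕ, j + 1 ≤ t → t ≤ Nat.choose t j := by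
  intro t
  induction t with
  | zero => omega
  | succ s ih =>
    intro hs
    rcases Nat.lt_or_ge s (j + 1) with h | h
    · have hsj : s = j := by omega
      subst hsj
      rw [Nat.choose_succ_self_right]
    · have h1 := ih h
      have h2 : 1 ≤ Nat.choose s (j - 1) := Nat.choose_pos (by omega)
      have hrec : Nat.choose (s + 1) j = Nat.choose s (j - 1) + Nat.choose s j := by
        obtain ⟨i, rfl⟩ : ∃ i, j = i + 1 := ⟨j - 1, by omega⟩
        simp [Nat.choose_succ_succ]
      omega

/-- For `k ≥ 1`, `t ≥ k+2` and `n = t + C(t, k+1)`: `n ≤ (e·t/(k+1))^{k+1}`, and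
consequently `t/k ≥ (1/e) · n^{1/(k+1)}` (so the lower-bound construction has
`k`-CF chromatic number `Ω(n^{1/(k+1)})`). -/
theorem stmt13 (k t n : ℕ) (hk : 1 ≤ k) (ht : k + 2 ≤ t)
    (hn : n = t + Nat.choose t (k + 1)) :
    (n : ℝ) ≤ (Real.exp 1 * t / (k + 1)) ^ (k + 1) ∧
    (1 / Real.exp 1) * (n : ℝ) ^ ((1 : ℝ) / (k + 1)) ≤ (t : ℝ) / k := by
  have hk1 : (0 : ℝ) < (k : ℝ) + 1 := by positivity
  have htC : t ≤ Nat.choose t (k + 1) := aux_le_choose (k + 1) (by omega) t (by omega)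
  have hchoose : (Nat.choose t (k + 1) : ℝ) ≤ (t : ℝ) ^ (k + 1) / Nat.factorial (k + 1) :=
    Nat.choose_le_pow_div (k + 1) t
  have hfacpos : (0 : ℝ) < Nat.factorial (k + 1) := by positivity
  have h2 := aux_two_pow_le (k + 1) (by omega)
  have hcastk : ((k + 1 : ℕ) : ℝ) = (k : ℝ) + 1 := by push_cast; ring
  rw [hcastk] at h2
  have hmain : (n : ℝ) ≤ (Real.exp 1 * t / (k + 1)) ^ (k + 1) := by
    have hn' : (n : ℝ) ≤ 2 * Nat.choose t (k + 1) := by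
      rw [hn]; push_cast
      have : (t : ℝ) ≤ Nat.choose t (k + 1) := by exact_mod_cast htC
      linarith
    have step : 2 * ((t : ℝ) ^ (k + 1) / Nat.factorial (k + 1)) ≤
        (Real.exp 1 * t / (k + 1)) ^ (k + 1) := by
      rw [div_pow, mul_pow, mul_div_assoc', div_le_div_iff₀ hfacpos (by positivity)]
      calc 2 * (t : ℝ) ^ (k + 1) * ((k : ℝ) + 1) ^ (k + 1)
          = (2 * ((k : ℝ) + 1) ^ (k + 1)) * (t : ℝ) ^ (k + 1) := by ring
        _ ≤ (Real.exp 1 ^ (k + 1) * Nat.factorial (k + 1)) * (t : ℝ) ^ (k + 1) := by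
            apply mul_le_mul_of_nonneg_right h2 (by positivity)
        _ = Real.exp 1 ^ (k + 1) * (t : ℝ) ^ (k + 1) * Nat.factorial (k + 1) := by ring
    calc (n : ℝ) ≤ 2 * Nat.choose t (k + 1) := hn'
      _ ≤ 2 * ((t : ℝ) ^ (k + 1) / Nat.factorial (k + 1)) := by
          apply mul_le_mul_of_nonneg_left hchoose (by norm_num)
      _ ≤ _ := step
  refine ⟨hmain, ?_⟩
  have hA : (0 : ℝ) ≤ Real.exp 1 * t / (k + 1) := by positivity
  have hroot : (n : ℝ) ^ ((1 : ℝ) / (k + 1)) ≤ Real.exp 1 * t / (k + 1) := by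
    have h1 : (n : ℝ) ^ ((1 : ℝ) / (k + 1)) ≤
        ((Real.exp 1 * t / (k + 1)) ^ (k + 1)) ^ ((1 : ℝ) / (k + 1)) :=
      Real.rpow_le_rpow (by positivity) hmain (by positivity)
    have h2 : ((Real.exp 1 * t / (k + 1)) ^ (k + 1) : ℝ) ^ ((1 : ℝ) / (k + 1)) =
        Real.exp 1 * t / (k + 1) := by
      rw [← Real.rpow_natCast (Real.exp 1 * t / (k + 1)) (k + 1),
        ← Real.rpow_mul hA]
      have : ((k + 1 : ℕ) : ℝ) * ((1 : ℝ) / (k + 1)) = 1 := by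
        push_cast; field_simp
      rw [this, Real.rpow_one]
    rw [h2] at h1; exact h1
  have hepos := Real.exp_pos 1
  have hkpos : (0 : ℝ) < (k : ℝ) := by exact_mod_cast hk
  calc (1 / Real.exp 1) * (n : ℝ) ^ ((1 : ℝ) / (k + 1))
      ≤ (1 / Real.exp 1) * (Real.exp 1 * t / (k + 1)) := by
        apply mul_le_mul_of_nonneg_left hroot (by positivity)
    _ = (t : ℝ) / (k + 1) := by field_simp
    _ ≤ (t : ℝ) / k := by
        apply div_le_div_of_nonneg_left (by positivity) hkpos (by linarith)
end

section
/- The dual hypergraph of any finite multiset 𝓘 of closed intervals on a line admits a conflict-free coloring with 3 colors; that is, one can 3-color the intervals so that for every point x covered by at least one interval, some color appears exactly once among the intervals containing x. -/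
open Finset

/-- Key induction: for any "reach" `r`, there is a coloring `c` such that
all non-`2`-colored ("chosen") intervals extend beyond `r`, the chosen
intervals except possibly a designated head (which gets color `g`) start
strictly after `r`, and the coloring is conflict-free for all points `> r`,
with a chosen witness. -/
private lemma key_lemma {ι : Type*} [Fintype ι] (a b : ι → ℝ) (n : ℕ) :
    ∀ r : ℝ, (Finset.univ.filter (fun j => r < b j)).card ≤ n →
    ∀ g : Fin 3, g ≠ 2 →
    ∃ c : ι → Fin 3,
      (∀ j, c j ≠ 2 → r < b j) ∧
      ((∀ j, c j ≠ 2 → r < a j) ∨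
        ∃ h, c h = g ∧ ∀ j, c j ≠ 2 → j ≠ h → r < a j) ∧
      (∀ x : ℝ, r < x → (∃ j, x ∈ Set.Icc (a j) (b j)) →
        ∃ i, (x ∈ Set.Icc (a i) (b i) ∧ c i ≠ 2) ∧
          ∀ j, x ∈ Set.Icc (a j) (b j) → c j = c i → j = i) := by
  classical
  induction n with
  | zero =>
    intro r hcard g hg
    have hempty : ∀ j, ¬ r < b j := by
      intro j hj
      have hmem : j ∈ Finset.univ.filter (fun j => r < b j) := by simp [hj]
      have := Finset.card_pos.mpr ⟨j, hmem⟩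
      omega
    refine ⟨fun _ => 2, by simp, Or.inl (by simp), ?_⟩
    rintro x hx ⟨j, hj⟩
    rw [Set.mem_Icc] at hj
    exact absurd (lt_of_lt_of_le hx hj.2) (hempty j)
  | succ n IH =>
    intro r hcard g hg
    by_cases hs : ∃ j, r < b j
    swap
    · push_neg at hs
      refine ⟨fun _ => 2, by simp, Or.inl (by simp), ?_⟩
      rintro x hx ⟨j, hj⟩
      rw [Set.mem_Icc] at hj
      exact absurd (lt_of_lt_of_le hx hj.2) (not_lt.mpr (hs j))
    have hgex : ∃ g' : Fin 3, g' ≠ 2 ∧ g' ≠ g := by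
      revert hg; fin_cases g <;> decide
    obtain ⟨g', hg'2, hg'g⟩ := hgex
    have main : ∀ i : ι, r < b i → (∀ j, b i < b j → r < a j) →
        (∀ x : ℝ, r < x → x ≤ b i → (∃ j, x ∈ Set.Icc (a j) (b j)) → a i ≤ x) →
        ∃ c : ι → Fin 3,
          (∀ j, c j ≠ 2 → r < b j) ∧
          ((∀ j, c j ≠ 2 → r < a j) ∨
            ∃ h, c h = g ∧ ∀ j, c j ≠ 2 → j ≠ h → r < a j) ∧
          (∀ x : ℝ, r < x → (∃ j, x ∈ Set.Icc (a j) (b j)) →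
            ∃ i, (x ∈ Set.Icc (a i) (b i) ∧ c i ≠ 2) ∧
              ∀ j, x ∈ Set.Icc (a j) (b j) → c j = c i → j = i) := by
      intro i hbi H2 H3
      have hcard' : (Finset.univ.filter (fun j => b i < b j)).card ≤ n := by
        have hsub : Finset.univ.filter (fun j => b i < b j) ⊆
            Finset.univ.filter (fun j => r < b j) := by
          intro j hj
          simp only [Finset.mem_filter, Finset.mem_univ, true_and] at hj ⊢
          exact lt_trans hbi hj
        have hss : Finset.univ.filter (fun j => b i < b j) ⊂
            Finset.univ.filter (fun j => r < b j) := by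
          rw [Finset.ssubset_iff_of_subset hsub]
          exact ⟨i, by simp [hbi], by simp⟩
        have := Finset.card_lt_card hss
        omega
      obtain ⟨c', h0, hhd, hcf⟩ := IH (b i) hcard' g' hg'2
      have hc'i : c' i = 2 := by
        by_contra h; exact absurd (h0 i h) (lt_irrefl _)
      refine ⟨Function.update c' i g, ?_, ?_, ?_⟩
      · intro j hj
        by_cases hji : j = i
        · subst hji; exact hbi
        · rw [Function.update_of_ne hji] at hj
          exact lt_trans hbi (h0 j hj)
      · refine Or.inr ⟨i, Function.update_self _ _ _, ?_⟩
        intro j hj hji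
        rw [Function.update_of_ne hji] at hj
        rcases hhd with h1 | ⟨h', hh'c, hrest⟩
        · exact lt_trans hbi (h1 j hj)
        · by_cases hjh : j = h'
          · subst hjh
            exact H2 j (h0 j hj)
          · exact lt_trans hbi (hrest j hj hjh)
      · intro x hrx hex
        by_cases hxb : b i < x
        · obtain ⟨i', ⟨hi'x, hi'2⟩, hu⟩ := hcf x hxb hex
          have hi'i : i' ≠ i := fun h => hi'2 (h ▸ hc'i)
          refine ⟨i', ⟨hi'x, by rw [Function.update_of_ne hi'i]; exact hi'2⟩, ?_⟩
          intro j hjx hcj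
          have hji : j ≠ i := by
            rintro rfl
            rw [Set.mem_Icc] at hjx
            exact absurd hjx.2 (not_le.mpr hxb)
          apply hu j hjx
          rwa [Function.update_of_ne hji, Function.update_of_ne hi'i] at hcj
        · push_neg at hxb
          have hax : a i ≤ x := H3 x hrx hxb hex
          refine ⟨i, ⟨Set.mem_Icc.mpr ⟨hax, hxb⟩,
            by rw [Function.update_self]; exact hg⟩, ?_⟩
          intro j hjx hcj
          by_contra hji
          rw [Function.update_of_ne hji, Function.update_self] at hcj
          have hj2 : c' j ≠ 2 := by rw [hcj]; exact hg
          rw [Set.mem_Icc] at hjx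
          have hnot : ¬ b i < a j := fun h =>
            absurd hjx.1 (not_le.mpr (lt_of_le_of_lt hxb h))
          rcases hhd with h1 | ⟨h', hh'c, hrest⟩
          · exact hnot (h1 j hj2)
          · by_cases hjh : j = h'
            · subst hjh
              rw [hcj] at hh'c
              exact hg'g hh'c.symm
            · exact hnot (hrest j hj2 hjh)
    by_cases hA : ∃ i, a i ≤ r ∧ r < b i
    · -- Case A: pick an interval crossing the reach with maximal right end
      obtain ⟨i₀, hi₀⟩ := hA
      have htne : (Finset.univ.filter (fun i => a i ≤ r ∧ r < b i)).Nonempty :=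
        ⟨i₀, by simp [hi₀.1, hi₀.2]⟩
      obtain ⟨i, hit, hmax⟩ :=
        Finset.exists_max_image (Finset.univ.filter (fun i => a i ≤ r ∧ r < b i)) b htne
      simp only [Finset.mem_filter, Finset.mem_univ, true_and] at hit
      refine main i hit.2 ?_ ?_
      · intro j hbj
        by_contra h
        push_neg at h
        have hjmem : j ∈ Finset.univ.filter (fun i => a i ≤ r ∧ r < b i) := by
          simp [h, lt_trans hit.2 hbj]
        exact absurd (hmax j hjmem) (not_le.mpr hbj)
      · intro x hrx _ _
        exact le_trans hit.1 (le_of_lt hrx)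
    · -- Case B: gap; pick an interval with minimal left end among those beyond r
      push_neg at hA
      have HB : ∀ j, r < b j → r < a j := by
        intro j hj
        by_contra h
        push_neg at h
        exact absurd hj (not_lt.mpr (hA j h))
      obtain ⟨j₀, hj₀⟩ := hs
      have hsne : (Finset.univ.filter (fun j => r < b j)).Nonempty :=
        ⟨j₀, by simp [hj₀]⟩
      obtain ⟨i, his, hmin⟩ :=
        Finset.exists_min_image (Finset.univ.filter (fun j => r < b j)) a hsne
      simp only [Finset.mem_filter, Finset.mem_univ, true_and] at his
      refine main i his ?_ ?_
      · intro j hbj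
        exact HB j (lt_trans his hbj)
      · rintro x hrx hxb ⟨j, hj⟩
        rw [Set.mem_Icc] at hj
        have hjb : r < b j := lt_of_lt_of_le hrx hj.2
        have := hmin j (by simp [hjb])
        exact le_trans this hj.1

/-- The dual hypergraph of any finite multiset of closed intervals on a line
admits a conflict-free coloring with 3 colors: the intervals can be 3-colored so
that for every point covered by at least one interval, some interval containing
it has a color appearing exactly once among the intervals containing that point. -/
theorem stmt14 {ι : Type*} [Fintype ι] (a b : ι → ℝ) (hab : ∀ i, a i ≤ b i) :
    ∃ c : ι → Fin 3, ∀ x : ℝ, (∃ i, x ∈ Set.Icc (a i) (b i)) →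
      ∃ i, x ∈ Set.Icc (a i) (b i) ∧
        ∀ j, x ∈ Set.Icc (a j) (b j) → c j = c i → j = i := by
  classical
  cases isEmpty_or_nonempty ι with
  | inl h =>
    refine ⟨fun _ => 2, ?_⟩
    rintro x ⟨i, -⟩
    exact absurd trivial (h.elim i)
  | inr h =>
    obtain ⟨i₀⟩ := h
    set r₀ : ℝ := (Finset.univ.inf' ⟨i₀, Finset.mem_univ i₀⟩ a) - 1 with hr₀
    obtain ⟨c, h0, hhd, hcf⟩ := key_lemma a b (Fintype.card ι) r₀
      (le_trans (Finset.card_filter_le _ _) (le_of_eq (Finset.card_univ))) 0 (by decide)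
    refine ⟨c, ?_⟩
    rintro x ⟨j, hj⟩
    have hja : r₀ < a j := by
      have : Finset.univ.inf' ⟨i₀, Finset.mem_univ i₀⟩ a ≤ a j :=
        Finset.inf'_le a (Finset.mem_univ j)
      linarith
    have hrx : r₀ < x := lt_of_lt_of_le hja (Set.mem_Icc.mp hj).1
    obtain ⟨i, ⟨hix, -⟩, hu⟩ := hcf x hrx ⟨j, hj⟩
    exact ⟨i, hix, hu⟩
end

section
/- The overlap graph of any finite family of closed intervals on a line (with distinct endpoints) is isomorphic to the intersection graph of a family of grounded L-shapes: one can map each interval [a, b] to the L-shape consisting of a vertical segment from (a, 0) down to (a, -i) and a horizontal segment from (a, -i) to (b, -i), where i is the rank of b among the right endpoints, such that two intervals overlap (intersect without nesting) if and only if the corresponding L-shapes intersect. -/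
/-- The rank of the right endpoint `b i` among the right endpoints. -/
noncomputable def rightRank (n : ℕ) (b : Fin n → ℝ) (i : Fin n) : ℕ :=
  (Finset.univ.filter fun j => b j ≤ b i).card

/-- The grounded L-shape associated to the interval `[a i, b i]`: a vertical
segment from `(a i, 0)` down to `(a i, -r i)` together with a horizontal segment
from `(a i, -r i)` to `(b i, -r i)`, where `r i` is the rank of `b i` among the
right endpoints. -/
noncomputable def groundedL (n : ℕ) (a b : Fin n → ℝ) (i : Fin n) : Set (ℝ × ℝ) :=
  {p | (p.1 = a i ∧ -(rightRank n b i : ℝ) ≤ p.2 ∧ p.2 ≤ 0) ∨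
       (p.2 = -(rightRank n b i : ℝ) ∧ a i ≤ p.1 ∧ p.1 ≤ b i)}

lemma rank_lt (n : ℕ) (b : Fin n → ℝ) {i j : Fin n} (h : b i < b j) :
    rightRank n b i < rightRank n b j := by
  apply Finset.card_lt_card
  constructor
  · intro k hk
    simp only [Finset.mem_filter, Finset.mem_univ, true_and] at *
    exact hk.trans h.le
  · intro hsub
    have := hsub (Finset.mem_filter.mpr ⟨Finset.mem_univ j, le_refl _⟩)
    simp only [Finset.mem_filter, Finset.mem_univ, true_and] at this
    exact absurd this (not_le.mpr h)

/-- For a finite family of closed intervals with distinct endpoints, two intervals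
overlap (intersect without nesting) if and only if the corresponding grounded
L-shapes intersect; hence the overlap graph of the intervals is isomorphic to the
intersection graph of the grounded L-shapes. -/
theorem stmt16 (n : ℕ) (a b : Fin n → ℝ) (hab : ∀ i, a i < b i)
    (hdist : Function.Injective (Sum.elim a b : Fin n ⊕ Fin n → ℝ)) :
    ∀ i j : Fin n, i ≠ j →
      (((a i < a j ∧ a j < b i ∧ b i < b j) ∨ (a j < a i ∧ a i < b j ∧ b j < b i)) ↔
        (groundedL n a b i ∩ groundedL n a b j).Nonempty) := by
  intro i j hij
  have haa : a i ≠ a j := fun h => hij (Sum.inl.inj (hdist (show Sum.elim a b (Sum.inl i) = Sum.elim a b (Sum.inl j) from h)))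
  have hbb : b i ≠ b j := fun h => hij (Sum.inr.inj (hdist (show Sum.elim a b (Sum.inr i) = Sum.elim a b (Sum.inr j) from h)))
  have habij : a i ≠ b j := fun h => by
    cases hdist (show Sum.elim a b (Sum.inl i) = Sum.elim a b (Sum.inr j) from h)
  have habji : a j ≠ b i := fun h => by
    cases hdist (show Sum.elim a b (Sum.inl j) = Sum.elim a b (Sum.inr i) from h)
  -- rank ≤ implies b ≤
  have rank_le : ∀ {k l : Fin n}, rightRank n b k ≤ rightRank n b l → b k ≤ b l := by
    intro k l h
    by_contra hlt
    exact absurd (rank_lt n b (not_le.mp hlt)) (not_lt.mpr h)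
  constructor
  · rintro (⟨h1, h2, h3⟩ | ⟨h1, h2, h3⟩)
    · refine ⟨(a j, -(rightRank n b i : ℝ)), Or.inr ⟨rfl, h1.le, h2.le⟩,
        Or.inl ⟨rfl, ?_, ?_⟩⟩
      · exact neg_le_neg (Nat.cast_le.mpr (rank_lt n b h3).le)
      · simp [neg_nonpos]
    · refine ⟨(a i, -(rightRank n b j : ℝ)), Or.inl ⟨rfl, ?_, ?_⟩,
        Or.inr ⟨rfl, h1.le, h2.le⟩⟩
      · exact neg_le_neg (Nat.cast_le.mpr (rank_lt n b h3).le)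
      · simp [neg_nonpos]
  · rintro ⟨p, hpi, hpj⟩
    rcases hpi with ⟨hi1, hi2, hi3⟩ | ⟨hi1, hi2, hi3⟩ <;>
      rcases hpj with ⟨hj1, hj2, hj3⟩ | ⟨hj1, hj2, hj3⟩
    · exact absurd (hi1.symm.trans hj1) haa
    · -- vertical i, horizontal j : a j < a i < b j < b i
      right
      have hrle : rightRank n b j ≤ rightRank n b i := by
        have : -(rightRank n b i : ℝ) ≤ -(rightRank n b j : ℝ) := hj1 ▸ hi2
        exact_mod_cast neg_le_neg_iff.mp this
      have hbji : b j < b i := lt_of_le_of_ne (rank_le hrle) (Ne.symm hbb)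
      have haji : a j < a i := lt_of_le_of_ne (hi1 ▸ hj2) (Ne.symm haa)
      have haibj : a i < b j := lt_of_le_of_ne (hi1 ▸ hj3) habij
      exact ⟨haji, haibj, hbji⟩
    · -- horizontal i, vertical j : a i < a j < b i < b j
      left
      have hrle : rightRank n b i ≤ rightRank n b j := by
        have : -(rightRank n b j : ℝ) ≤ -(rightRank n b i : ℝ) := hi1 ▸ hj2
        exact_mod_cast neg_le_neg_iff.mp this
      have hbij : b i < b j := lt_of_le_of_ne (rank_le hrle) hbb
      have haij : a i < a j := lt_of_le_of_ne (hj1 ▸ hi2) haa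
      have hajbi : a j < b i := lt_of_le_of_ne (hj1 ▸ hi3) habji
      exact ⟨haij, hajbi, hbij⟩
    · -- horizontal both : ranks equal, contradiction
      exfalso
      have : (rightRank n b i : ℝ) = rightRank n b j := by
        have := hi1.symm.trans hj1
        linarith [neg_eq_iff_eq_neg.mp this]
      have hre : rightRank n b i = rightRank n b j := by exact_mod_cast this
      rcases lt_or_gt_of_ne hbb with h | h
      · exact absurd (rank_lt n b h) (by omega)
      · exact absurd (rank_lt n b h) (by omega)
end

section
/- For every k ≥ 1 and every t ≥ 1, there exists a family of n = 2^{k(t-1)+1} + 2^{k(t-1)} - 1 intervals on a line whose overlap graph requires at least t colors in any k-CF coloring; consequently, the maximum k-CF chromatic number of circle graphs on n vertices is Ω(log n) for every fixed k. -/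
/-- Two intervals overlap: they intersect but neither contains the other. -/
def Overlap {n : ℕ} (a b : Fin n → ℝ) (i j : Fin n) : Prop :=
  (a i < a j ∧ a j < b i ∧ b i < b j) ∨ (a j < a i ∧ a i < b j ∧ b j < b i)

/-!
Let `m = k(t-1)`. The family consists of the dyadic intervals `[b 2^e, (b+1) 2^e] ⊆ [0, 2^m]`
and, for each `y < 2^m`, a chain interval starting at `y + 1/2` and ending to the right of `2^m`.
Dyadic intervals never cross each other, so the neighbours of the dyadic interval of the block
`[b 2^e, (b+1) 2^e)` are exactly the chain intervals of the `y` in that block. A `k`-CF colouring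
therefore colours `[0, 2^m)` so that every dyadic block has a colour occurring in it between `1`
and `k` times. Such a colour `x` of a block of length `2^{k(s+1)}` misses one of its `2^k > k`
sub-blocks of length `2^{ks}`, which by induction on `s` carries `s + 1` colours, none equal to `x`.
-/

open Finset

namespace CircleGraphCF

variable {α ι κ : Type*}

def IsCFColoring (k : ℕ) (adj : ι → ι → Prop) (c : ι → α) : Prop :=
  ∀ i, (∃ j, adj i j) → ∃ col, 1 ≤ {j | adj i j ∧ c j = col}.ncard ∧
    {j | adj i j ∧ c j = col}.ncard ≤ k

theorem IsCFColoring.comp_equiv {k : ℕ} {adj : ι → ι → Prop} {c : ι → α}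
    (hc : IsCFColoring k adj c) (σ : κ ≃ ι) :
    IsCFColoring k (fun u v => adj (σ u) (σ v)) (c ∘ σ) := by
  rintro u ⟨v, huv⟩
  obtain ⟨col, hcol⟩ := hc (σ u) ⟨σ v, huv⟩
  refine ⟨col, ?_⟩
  have hpre : {w | adj (σ u) (σ w) ∧ (c ∘ σ) w = col} =
      σ ⁻¹' {j | adj (σ u) j ∧ c j = col} := rfl
  rwa [hpre, Set.ncard_preimage_of_injective_subset_range σ.injective (by simp)]

def HasCFColor [DecidableEq α] (k : ℕ) (f : ℕ → α) (S : Finset ℕ) : Prop :=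
  ∃ col, 1 ≤ #(S.filter (f · = col)) ∧ #(S.filter (f · = col)) ≤ k

def dyadicBlock (e b : ℕ) : Finset ℕ := Ico (b * 2 ^ e) ((b + 1) * 2 ^ e)

theorem mem_dyadicBlock {e b j : ℕ} : j ∈ dyadicBlock e b ↔ j / 2 ^ e = b := by
  have h : 0 < 2 ^ e := by positivity
  rw [dyadicBlock, mem_Ico, ← Nat.le_div_iff_mul_le h, ← Nat.div_lt_iff_lt_mul h]
  omega

theorem card_dyadicBlock (e b : ℕ) : #(dyadicBlock e b) = 2 ^ e := by
  rw [dyadicBlock, Nat.card_Ico, add_one_mul, Nat.add_sub_cancel_left]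

theorem dyadicBlock_subset_iff {e b e' b' : ℕ} :
    dyadicBlock e b ⊆ dyadicBlock e' b' ↔ e ≤ e' ∧ b / 2 ^ (e' - e) = b' := by
  constructor
  · intro h
    have he : e ≤ e' := by
      have hcard := card_le_card h
      rwa [card_dyadicBlock, card_dyadicBlock, Nat.pow_le_pow_iff_right one_lt_two] at hcard
    have hmem : b * 2 ^ e ∈ dyadicBlock e b :=
      mem_dyadicBlock.2 (Nat.mul_div_cancel b (by positivity))
    refine ⟨he, ?_⟩
    rw [← mem_dyadicBlock.1 (h hmem), ← pow_mul_pow_sub 2 he, mul_comm (2 ^ e),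
      Nat.mul_div_mul_right _ _ (by positivity)]
  · rintro ⟨he, rfl⟩ j hj
    rw [mem_dyadicBlock] at hj ⊢
    rw [← hj, Nat.div_div_eq_div_mul, ← pow_add, Nat.add_sub_cancel' he]

theorem exists_dyadicBlock_subset_notMem_image [DecidableEq α] (f : ℕ → α)
    {col : α} {e r b : ℕ} (h : #((dyadicBlock (e + r) b).filter (f · = col)) < 2 ^ r) :
    ∃ q, dyadicBlock e q ⊆ dyadicBlock (e + r) b ∧ col ∉ (dyadicBlock e q).image f := by
  obtain ⟨q, hq, hqP⟩ := exists_mem_notMem_of_card_lt_card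
    (s := ((dyadicBlock (e + r) b).filter (f · = col)).image (· / 2 ^ e))
    (t := dyadicBlock r b) (by rw [card_dyadicBlock]; exact card_image_le.trans_lt h)
  have hsub : dyadicBlock e q ⊆ dyadicBlock (e + r) b :=
    dyadicBlock_subset_iff.2
      ⟨Nat.le_add_right e r, by rwa [Nat.add_sub_cancel_left, ← mem_dyadicBlock]⟩
  refine ⟨q, hsub, fun hcol => hqP ?_⟩
  obtain ⟨j, hj, hjcol⟩ := mem_image.1 hcol
  exact mem_image.2 ⟨j, mem_filter.2 ⟨hsub hj, hjcol⟩, mem_dyadicBlock.1 hj⟩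

theorem succ_le_card_image_of_hasCFColor [DecidableEq α] (f : ℕ → α) (k : ℕ) :
    ∀ s b, (∀ e q, dyadicBlock e q ⊆ dyadicBlock (k * s) b →
      HasCFColor k f (dyadicBlock e q)) →
      s + 1 ≤ #((dyadicBlock (k * s) b).image f)
  | 0, b, _ => card_pos.2 ((card_pos.1 (by rw [card_dyadicBlock]; positivity)).image f)
  | s + 1, b, h => by
    obtain ⟨col, hpos, hle⟩ := h _ b subset_rfl
    obtain ⟨q, hsub, hcol⟩ := exists_dyadicBlock_subset_notMem_image f (e := k * s) (r := k)
      (hle.trans_lt Nat.lt_two_pow_self)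
    have ih := succ_le_card_image_of_hasCFColor f k s q fun e q' h' => h e q' (h'.trans hsub)
    obtain ⟨j, hj⟩ := card_pos.1 hpos
    have hmem : col ∈ (dyadicBlock (k * (s + 1)) b).image f :=
      mem_image.2 ⟨j, mem_filter.1 hj⟩
    calc s + 1 + 1 ≤ #(insert col ((dyadicBlock (k * s) q).image f)) := by
          rw [card_insert_of_notMem hcol]; omega
      _ ≤ _ := card_le_card (insert_subset hmem (image_subset_image hsub))

theorem succ_mul_le_of_dvd {d q x : ℕ} (hx : d ∣ x) (h : q * d < x) : (q + 1) * d ≤ x := by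
  obtain ⟨r, rfl⟩ := hx
  rw [mul_comm d] at h ⊢
  exact Nat.mul_le_mul_right d (Nat.lt_of_mul_lt_mul_right h)

theorem not_dyadic_crossing (e e' b b' : ℕ) :
    ¬ (b * 2 ^ e < b' * 2 ^ e' ∧ b' * 2 ^ e' < (b + 1) * 2 ^ e ∧
      (b + 1) * 2 ^ e < (b' + 1) * 2 ^ e') := by
  rintro ⟨h₁, h₂, h₃⟩
  rcases le_total e e' with h | h
  · have := succ_mul_le_of_dvd (dvd_mul_of_dvd_right (pow_dvd_pow 2 h) b') h₁
    omega
  · have := succ_mul_le_of_dvd (dvd_mul_of_dvd_right (pow_dvd_pow 2 h) (b + 1)) h₂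
    omega

section Family

variable {m : ℕ}

variable (m) in
abbrev Node := Σ e : Fin (m + 1), Fin (2 ^ (m - e))

variable (m) in
abbrev Vertex := Fin (2 ^ m) ⊕ Node m

def Node.block (u : Node m) : Finset ℕ := dyadicBlock u.1 u.2

theorem Node.succ_mul_le (u : Node m) : ((u.2 : ℕ) + 1) * 2 ^ (u.1 : ℕ) ≤ 2 ^ m :=
  calc ((u.2 : ℕ) + 1) * 2 ^ (u.1 : ℕ) ≤ 2 ^ (m - u.1) * 2 ^ (u.1 : ℕ) :=
        Nat.mul_le_mul_right _ u.2.2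
    _ = 2 ^ m := by rw [← pow_add, Nat.sub_add_cancel (Nat.lt_succ_iff.1 u.1.2)]

theorem Node.lt_of_mem_block {u : Node m} {x : ℕ} (hx : x ∈ u.block) : x < 2 ^ m := by
  have := u.succ_mul_le
  rw [Node.block, dyadicBlock, mem_Ico] at hx
  omega

theorem card_vertex : Fintype.card (Vertex m) = 2 ^ (m + 1) + 2 ^ m - 1 := by
  have hgeom : ∑ e : Fin (m + 1), 2 ^ (m - (e : ℕ)) = 2 ^ (m + 1) - 1 := by
    rw [Fin.sum_univ_eq_sum_range (fun e => 2 ^ (m - e)), ← sum_range_reflect,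
      sum_congr rfl fun x hx => by
        rw [Nat.add_sub_cancel, Nat.sub_sub_self (Nat.lt_succ_iff.1 (mem_range.1 hx))]]
    simpa using Nat.geomSum_eq le_rfl (m + 1)
  have : 1 ≤ 2 ^ (m + 1) := Nat.one_le_two_pow
  simp only [Fintype.card_sum, Fintype.card_fin, Fintype.card_sigma, hgeom]
  omega

/- All endpoints are doubled to make them natural numbers: the chain interval of `y` starts at
`y + 1/2`. -/
def leftEnd : Vertex m → ℕ
  | .inl y => 2 * y + 1
  | .inr u => 2 * (u.2 * 2 ^ (u.1 : ℕ))

def rightEnd : Vertex m → ℕ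
  | .inl y => 2 ^ (m + 2) - 2 * y
  | .inr u => 2 * ((u.2 + 1) * 2 ^ (u.1 : ℕ))

def Crosses (u v : Vertex m) : Prop :=
  (leftEnd u < leftEnd v ∧ leftEnd v < rightEnd u ∧ rightEnd u < rightEnd v) ∨
    (leftEnd v < leftEnd u ∧ leftEnd u < rightEnd v ∧ rightEnd v < rightEnd u)

def chainVertex (x : ℕ) : Vertex m := .inl (Fin.ofNat (2 ^ m) x)

theorem leftEnd_lt_rightEnd : ∀ v : Vertex m, leftEnd v < rightEnd v
  | .inl y => by
    have : 2 ^ (m + 2) = 4 * 2 ^ m := by ring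
    have := y.2
    simp only [leftEnd, rightEnd]
    omega
  | .inr u => by
    have : 0 < 2 ^ (u.1 : ℕ) := by positivity
    simp only [leftEnd, rightEnd, add_one_mul]
    omega

theorem not_crosses_inr_inr (u u' : Node m) : ¬ Crosses (.inr u) (.inr u') := by
  simp only [Crosses, leftEnd, rightEnd]
  have := not_dyadic_crossing u.1 u'.1 u.2 u'.2
  have := not_dyadic_crossing u'.1 u.1 u'.2 u.2
  omega

theorem crosses_inr_inl_iff (u : Node m) (y : Fin (2 ^ m)) :
    Crosses (.inr u) (.inl y) ↔ (y : ℕ) ∈ u.block := by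
  have : 2 ^ (m + 2) = 4 * 2 ^ m := by ring
  have := u.succ_mul_le
  have := y.2
  simp only [Crosses, leftEnd, rightEnd, Node.block, dyadicBlock, mem_Ico]
  omega

theorem crosses_inr_iff (u : Node m) (v : Vertex m) :
    Crosses (.inr u) v ↔ ∃ x ∈ u.block, v = chainVertex x := by
  rcases v with y | u'
  · rw [crosses_inr_inl_iff]
    constructor
    · exact fun hy => ⟨y, hy, congrArg Sum.inl (Fin.ofNat_val_eq_self y).symm⟩
    · rintro ⟨x, hx, hxy⟩
      rwa [Sum.inl_injective hxy, Fin.val_ofNat, Nat.mod_eq_of_lt (Node.lt_of_mem_block hx)]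
  · simp [chainVertex, not_crosses_inr_inr]

theorem injOn_chainVertex (u : Node m) : Set.InjOn (chainVertex (m := m)) u.block := by
  intro x hx x' hx' h
  have h' := congrArg Fin.val (Sum.inl_injective h)
  rwa [Fin.val_ofNat, Fin.val_ofNat, Nat.mod_eq_of_lt (Node.lt_of_mem_block hx),
    Nat.mod_eq_of_lt (Node.lt_of_mem_block hx')] at h'

theorem ncard_crosses_inr [DecidableEq α] (c : Vertex m → α) (u : Node m) (col : α) :
    {v | Crosses (.inr u) v ∧ c v = col}.ncard =
      #(u.block.filter fun x => c (chainVertex x) = col) := by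
  have hset : {v | Crosses (.inr u) v ∧ c v = col} =
      chainVertex '' ↑(u.block.filter fun x => c (chainVertex x) = col) := by
    ext v
    simp only [Set.mem_ofPred_eq, crosses_inr_iff, coe_filter, Set.mem_image]
    aesop
  rw [hset, ((injOn_chainVertex u).mono (coe_subset.2 (filter_subset _ _))).ncard_image,
    Set.ncard_coe_finset]

theorem IsCFColoring.hasCFColor_block [DecidableEq α] {k : ℕ} {c : Vertex m → α}
    (hc : IsCFColoring k Crosses c) (u : Node m) : HasCFColor k (c ∘ chainVertex) u.block := by
  have hmem : (u.2 : ℕ) * 2 ^ (u.1 : ℕ) ∈ u.block :=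
    mem_dyadicBlock.2 (Nat.mul_div_cancel _ (by positivity))
  obtain ⟨col, hcol⟩ := hc (.inr u) ⟨_, (crosses_inr_iff u _).2 ⟨_, hmem, rfl⟩⟩
  rw [ncard_crosses_inr] at hcol
  exact ⟨col, hcol⟩

theorem overlap_symm_eq_crosses {n : ℕ} (σ : Fin n ≃ Vertex m) :
    (fun u v => Overlap (fun i => (leftEnd (σ i) : ℝ)) (fun i => (rightEnd (σ i) : ℝ))
      (σ.symm u) (σ.symm v)) = Crosses := by
  ext u v
  simp [Overlap, Crosses]

end Family

end CircleGraphCF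

open CircleGraphCF in
theorem stmt17_general (k t : ℕ) :
    ∃ a b : Fin (2 ^ (k * (t - 1) + 1) + 2 ^ (k * (t - 1)) - 1) → ℝ,
      (∀ i, a i < b i) ∧
      ∀ c : Fin (2 ^ (k * (t - 1) + 1) + 2 ^ (k * (t - 1)) - 1) → ℕ,
        (∀ i, (∃ j, Overlap a b i j) →
          ∃ col, 1 ≤ {j | Overlap a b i j ∧ c j = col}.ncard ∧
            {j | Overlap a b i j ∧ c j = col}.ncard ≤ k) →
        t ≤ (Finset.univ.image c).card := by
  set m := k * (t - 1)
  let σ := (Fintype.equivFinOfCardEq (card_vertex (m := m))).symm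
  refine ⟨fun i => leftEnd (σ i), fun i => rightEnd (σ i),
    fun i => Nat.cast_lt.2 (leftEnd_lt_rightEnd (σ i)), fun c hc => ?_⟩
  have hcross : IsCFColoring k Crosses (c ∘ σ.symm) :=
    overlap_symm_eq_crosses σ ▸ IsCFColoring.comp_equiv (adj := Overlap _ _) hc σ.symm
  have hcount := succ_le_card_image_of_hasCFColor (c ∘ σ.symm ∘ chainVertex) k (t - 1) 0
    fun e q hsub => by
      obtain ⟨he, hq⟩ := dyadicBlock_subset_iff.1 hsub
      exact hcross.hasCFColor_block
        ⟨⟨e, Nat.lt_succ_of_le he⟩, ⟨q, by simpa [Nat.div_eq_zero_iff] using hq⟩⟩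
  calc t ≤ t - 1 + 1 := by omega
    _ ≤ #((dyadicBlock m 0).image (c ∘ σ.symm ∘ chainVertex)) := hcount
    _ ≤ #(univ.image c) := card_le_card fun x hx => by
      obtain ⟨y, -, rfl⟩ := mem_image.1 hx
      exact mem_image_of_mem c (mem_univ _)

/-- For every `k ≥ 1` and `t ≥ 1` there is a family of
`n = 2^{k(t-1)+1} + 2^{k(t-1)} - 1` intervals whose overlap graph (a circle
graph) requires at least `t` colors in any `k`-CF coloring. -/
theorem stmt17 (k t : ℕ) (hk : 1 ≤ k) (ht : 1 ≤ t) :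
    ∃ a b : Fin (2 ^ (k * (t - 1) + 1) + 2 ^ (k * (t - 1)) - 1) → ℝ,
      (∀ i, a i < b i) ∧
      ∀ c : Fin (2 ^ (k * (t - 1) + 1) + 2 ^ (k * (t - 1)) - 1) → ℕ,
        (∀ i, (∃ j, Overlap a b i j) →
          ∃ col, 1 ≤ {j | Overlap a b i j ∧ c j = col}.ncard ∧
            {j | Overlap a b i j ∧ c j = col}.ncard ≤ k) →
        t ≤ (Finset.univ.image c).card :=
  stmt17_general k t
end

section
/- Let H be a hypergraph on n vertices with at most m hyperedges. Then H admits a conflict-free coloring with O(√m) colors. -/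
/-- Any hypergraph with max degree `≤ D` whose edges lie in `U` has a
unique-minimum coloring with colors in `{0, ..., D}`. -/
theorem cf_lowdeg {V : Type} [Fintype V] [DecidableEq V] (D : ℕ) (U : Finset V) :
    ∀ (E : Finset (Finset V)),
      (∀ S ∈ E, S ⊆ U) →
      (∀ v : V, (E.filter (fun S => v ∈ S)).card ≤ D) →
      ∃ c : V → ℕ, (∀ w, c w ≤ D) ∧
        ∀ S ∈ E, S.Nonempty → ∃ x ∈ S, ∀ y ∈ S, y ≠ x → c x < c y := by
  induction U using Finset.strongInduction with
  | _ U ih =>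
  intro E hsub hdeg
  rcases U.eq_empty_or_nonempty with rfl | ⟨v, hv⟩
  · refine ⟨fun _ => 0, fun _ => Nat.zero_le _, ?_⟩
    intro S hS hne
    rw [Finset.subset_empty.mp (hsub S hS)] at hne
    exact absurd hne (by simp)
  · set E' := (E.image (fun S => S.erase v)).filter (fun T => T.Nonempty) with hE'
    have hsub' : ∀ T ∈ E', T ⊆ U.erase v := by
      intro T hT
      rcases Finset.mem_filter.mp hT with ⟨hT1, _⟩
      rcases Finset.mem_image.mp hT1 with ⟨S, hS, rfl⟩
      exact Finset.erase_subset_erase v (hsub S hS)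
    have hdeg' : ∀ w : V, (E'.filter (fun S => w ∈ S)).card ≤ D := by
      intro w
      have hss : E'.filter (fun S => w ∈ S) ⊆
          (E.filter (fun S => w ∈ S)).image (fun S => S.erase v) := by
        intro T hT
        rcases Finset.mem_filter.mp hT with ⟨hT1, hwT⟩
        rcases Finset.mem_image.mp (Finset.mem_filter.mp hT1).1 with ⟨S, hS, rfl⟩
        exact Finset.mem_image.mpr
          ⟨S, Finset.mem_filter.mpr ⟨hS, Finset.mem_of_mem_erase hwT⟩, rfl⟩
      calc (E'.filter (fun S => w ∈ S)).card
          ≤ ((E.filter (fun S => w ∈ S)).image (fun S => S.erase v)).card :=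
            Finset.card_le_card hss
        _ ≤ (E.filter (fun S => w ∈ S)).card := Finset.card_image_le
        _ ≤ D := hdeg w
    obtain ⟨c', hc'b, hc'⟩ := ih (U.erase v) (Finset.erase_ssubset hv) E' hsub' hdeg'
    -- the set of forbidden colors for `v`
    set f : Finset V → ℕ := fun S =>
      if h : (S.erase v).Nonempty then ((S.erase v).image c').min' (h.image c') else 0
      with hf
    set F := (E.filter (fun S => v ∈ S)).image f with hF
    have hFcard : F.card ≤ D := le_trans Finset.card_image_le (hdeg v)
    have hns : ¬ (Finset.range (D + 1) ⊆ F) := by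
      intro h
      have := Finset.card_le_card h
      simp only [Finset.card_range] at this
      omega
    obtain ⟨b, hbr, hbF⟩ := Finset.not_subset.mp hns
    have hbD : b ≤ D := Nat.lt_succ_iff.mp (Finset.mem_range.mp hbr)
    refine ⟨Function.update c' v b, ?_, ?_⟩
    · intro w
      rcases eq_or_ne w v with rfl | hw
      · simpa using hbD
      · simpa [Function.update_of_ne hw] using hc'b w
    · intro S hS hne
      by_cases hvS : v ∈ S
      · by_cases hTne : (S.erase v).Nonempty
        · have hTE' : S.erase v ∈ E' :=
            Finset.mem_filter.mpr ⟨Finset.mem_image.mpr ⟨S, hS, rfl⟩, hTne⟩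
          obtain ⟨x, hxT, hx⟩ := hc' _ hTE' hTne
          have hxv : x ≠ v := Finset.ne_of_mem_erase hxT
          have hxmin : ∀ y ∈ S.erase v, c' x ≤ c' y := by
            intro y hy
            rcases eq_or_ne y x with rfl | hyx
            · exact le_refl _
            · exact le_of_lt (hx y hy hyx)
          have hfS : f S = c' x := by
            rw [hf]
            simp only [dif_pos hTne]
            refine le_antisymm (Finset.min'_le _ _ (Finset.mem_image_of_mem c' hxT)) ?_
            obtain ⟨y, hy, hyeq⟩ := Finset.mem_image.mp
              (Finset.min'_mem ((S.erase v).image c') (hTne.image c'))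
            rw [← hyeq]
            exact hxmin y hy
          have hbne : b ≠ c' x := by
            intro hbeq
            apply hbF
            rw [hF]
            exact Finset.mem_image.mpr
              ⟨S, Finset.mem_filter.mpr ⟨hS, hvS⟩, by rw [hfS, hbeq]⟩
          rcases lt_or_gt_of_ne hbne with hlt | hgt
          · -- b < c' x : v is the unique minimum
            refine ⟨v, hvS, ?_⟩
            intro y hy hyv
            have hyT : y ∈ S.erase v := Finset.mem_erase.mpr ⟨hyv, hy⟩
            rw [Function.update_self, Function.update_of_ne hyv]
            exact lt_of_lt_of_le hlt (hxmin y hyT)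
          · -- c' x < b : x stays the unique minimum
            refine ⟨x, Finset.mem_of_mem_erase hxT, ?_⟩
            intro y hy hyx
            rcases eq_or_ne y v with rfl | hyv
            · rw [Function.update_self, Function.update_of_ne hxv]
              exact hgt
            · rw [Function.update_of_ne hyv, Function.update_of_ne hxv]
              exact hx y (Finset.mem_erase.mpr ⟨hyv, hy⟩) hyx
        · -- S = {v}
          refine ⟨v, hvS, ?_⟩
          intro y hy hyv
          exact absurd (Finset.mem_erase.mpr ⟨hyv, hy⟩)
            (by simp [Finset.not_nonempty_iff_eq_empty.mp hTne])
      · -- v ∉ S : S is an edge of E'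
        have hSE' : S ∈ E' := by
          refine Finset.mem_filter.mpr ⟨Finset.mem_image.mpr ⟨S, hS, ?_⟩, hne⟩
          exact Finset.erase_eq_of_notMem hvS
        obtain ⟨x, hxS, hx⟩ := hc' S hSE' hne
        refine ⟨x, hxS, ?_⟩
        intro y hy hyx
        have hxv : x ≠ v := fun h => hvS (h ▸ hxS)
        have hyv : y ≠ v := fun h => hvS (h ▸ hy)
        rw [Function.update_of_ne hyv, Function.update_of_ne hxv]
        exact hx y hy hyx

/-- Stripping high-degree vertices: every hypergraph has a unique-minimum
coloring with `k + d` colors where `k * d ≤ |E|`. -/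
theorem cf_strip {V : Type} [Fintype V] [DecidableEq V] (d : ℕ) (hd : 0 < d) :
    ∀ (n : ℕ) (E : Finset (Finset V)), E.card ≤ n →
      ∃ (c : V → ℕ) (k : ℕ), k * d ≤ E.card ∧ (∀ w, c w < k + d) ∧
        ∀ S ∈ E, S.Nonempty → ∃ x ∈ S, ∀ y ∈ S, y ≠ x → c x < c y := by
  intro n
  induction n with
  | zero =>
    intro E hE
    have hEe : E = ∅ := Finset.card_eq_zero.mp (Nat.le_zero.mp hE)
    subst hEe
    exact ⟨fun _ => 0, 0, by simp, fun w => by simpa using hd, by simp⟩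
  | succ n ihn =>
    intro E hE
    by_cases hhigh : ∃ v : V, d ≤ (E.filter (fun S => v ∈ S)).card
    · obtain ⟨v, hv⟩ := hhigh
      set E₂ := E.filter (fun S => v ∉ S) with hE₂
      have hsplit := Finset.card_filter_add_card_filter_not
        (s := E) (p := fun S => v ∈ S)
      have hcard : E₂.card + d ≤ E.card := by
        have : E₂.card = (E.filter (fun S => ¬ v ∈ S)).card := by rw [hE₂]
        omega
      obtain ⟨c', k', hk', hb', hcf'⟩ := ihn E₂ (by omega)
      refine ⟨fun w => if w = v then 0 else c' w + 1, k' + 1, ?_, ?_, ?_⟩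
      · calc (k' + 1) * d = k' * d + d := by ring
          _ ≤ E₂.card + d := by omega
          _ ≤ E.card := hcard
      · intro w
        show (if w = v then 0 else c' w + 1) < k' + 1 + d
        by_cases hw : w = v
        · rw [if_pos hw]; omega
        · rw [if_neg hw]
          have := hb' w
          omega
      · intro S hS hne
        by_cases hvS : v ∈ S
        · refine ⟨v, hvS, ?_⟩
          intro y hy hyv
          show (if v = v then 0 else c' v + 1) < (if y = v then 0 else c' y + 1)
          rw [if_pos rfl, if_neg hyv]
          omega
        · have hSE₂ : S ∈ E₂ := Finset.mem_filter.mpr ⟨hS, hvS⟩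
          obtain ⟨x, hxS, hx⟩ := hcf' S hSE₂ hne
          refine ⟨x, hxS, ?_⟩
          intro y hy hyx
          have hxv : x ≠ v := fun h => hvS (h ▸ hxS)
          have hyv : y ≠ v := fun h => hvS (h ▸ hy)
          show (if x = v then 0 else c' x + 1) < (if y = v then 0 else c' y + 1)
          rw [if_neg hxv, if_neg hyv]
          have := hx y hy hyx
          omega
    · push_neg at hhigh
      obtain ⟨c, hb, hcf⟩ := cf_lowdeg (d - 1) Finset.univ E
        (fun S _ => Finset.subset_univ S)
        (fun v => by have := hhigh v; omega)
      refine ⟨c, 0, by simp, fun w => ?_, hcf⟩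
      have := hb w
      omega

/-- There is a constant `C` such that every hypergraph with at most `m ≥ 1`
hyperedges admits a conflict-free coloring with at most `C · √m` colors. -/
theorem stmt18 :
    ∃ C : ℝ, 0 < C ∧
      ∀ (V : Type) [Fintype V] [DecidableEq V] (E : Finset (Finset V)) (m : ℕ),
        E.card ≤ m → 1 ≤ m →
        ∃ c : V → ℕ,
          ((Finset.univ.image c).card : ℝ) ≤ C * Real.sqrt m ∧
          ∀ S ∈ E, S.Nonempty →
            ∃ x ∈ S, ∀ y ∈ S, c y = c x → y = x := by
  refine ⟨3, by norm_num, ?_⟩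
  intro V _ _ E m hEm hm
  set d := Nat.sqrt m + 1 with hd
  obtain ⟨c, k, hk, hb, hcf⟩ := cf_strip d (by omega) E.card E (le_refl _)
  refine ⟨c, ?_, ?_⟩
  · -- counting colors
    have himg : Finset.univ.image c ⊆ Finset.range (k + d) := by
      intro a ha
      obtain ⟨w, _, rfl⟩ := Finset.mem_image.mp ha
      exact Finset.mem_range.mpr (hb w)
    have hcard : (Finset.univ.image c).card ≤ k + d :=
      le_trans (Finset.card_le_card himg) (by simp)
    have hkd : k * d ≤ m := le_trans hk hEm
    -- real estimates
    have hm1 : (1 : ℝ) ≤ (m : ℝ) := by exact_mod_cast hm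
    have hsq1 : (1 : ℝ) ≤ Real.sqrt m := by
      rw [show (1 : ℝ) = Real.sqrt 1 by simp]
      exact Real.sqrt_le_sqrt hm1
    have hsqpos : (0 : ℝ) < Real.sqrt m := lt_of_lt_of_le one_pos hsq1
    have hns : ((Nat.sqrt m : ℝ)) ≤ Real.sqrt m := by
      have h1 : ((Nat.sqrt m : ℝ)) ^ 2 ≤ (m : ℝ) := by
        have hn : Nat.sqrt m ^ 2 ≤ m := Nat.sqrt_le' m
        exact_mod_cast hn
      nlinarith [Real.sq_sqrt (show (0:ℝ) ≤ (m:ℝ) by positivity),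
        Real.sqrt_nonneg (m:ℝ), h1,
        sq_nonneg ((Nat.sqrt m : ℝ) - Real.sqrt m)]
    have hd_ge : Real.sqrt m ≤ (d : ℝ) := by
      have h2 : (m : ℝ) ≤ ((d : ℝ)) ^ 2 := by
        have hn : m ≤ d ^ 2 := by rw [hd]; exact (Nat.lt_succ_sqrt' m).le
        exact_mod_cast hn
      calc Real.sqrt m ≤ Real.sqrt ((d:ℝ)^2) := Real.sqrt_le_sqrt h2
        _ = (d : ℝ) := Real.sqrt_sq (by positivity)
    have hk_le : (k : ℝ) ≤ Real.sqrt m := by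
      have h3 : (k : ℝ) * (d : ℝ) ≤ (m : ℝ) := by exact_mod_cast hkd
      nlinarith [Real.sq_sqrt (show (0:ℝ) ≤ (m:ℝ) by positivity),
        mul_le_mul_of_nonneg_left hd_ge (show (0:ℝ) ≤ (k:ℝ) by positivity)]
    have h4 : ((Finset.univ.image c).card : ℝ) ≤ (k : ℝ) + (Nat.sqrt m : ℝ) + 1 := by
      have : ((Finset.univ.image c).card : ℝ) ≤ ((k + d : ℕ) : ℝ) := by
        exact_mod_cast hcard
      rw [hd] at this
      push_cast at this
      linarith
    linarith
  · intro S hS hne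
    obtain ⟨x, hxS, hx⟩ := hcf S hS hne
    refine ⟨x, hxS, ?_⟩
    intro y hy hcy
    by_contra hyx
    exact absurd hcy (ne_of_gt (hx y hy hyx))
end
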